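/- arXiv:2410.08360 — 9 statements merged into one kernel-verified Lean document; each statement's English description precedes it below -/
import Mathlib

section
/- Let $E \subseteq [n]^2$ be a symmetric edge set (with all self-loops), and let $\{p_{ij} \in (0,1) : (i,j) \in E, i \ne j\}$ be a pairwise comparison model whose canonical Markov matrix $S$ is irreducible, aperiodic, with unique stationary distribution $\pi$. If $S$ is reversible with respect to $\pi$ and $p_{ij} + p_{ji} = 1$ for all $(i,j) \in E$ with $i \ne j$, then the model is a BTL model: for all $(i,j) \in E$ with $i \ne j$, $p_{ij} = \pi_j/(\pi_i + \pi_j)$. -/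
theorem mul_eq_mul_of_mul_div_eq_mul_div {K : Type*} [Field K] {a b x y d : K} (hd : d ≠ 0)
    (h : a * (x / d) = b * (y / d)) : a * x = b * y := by
  rwa [mul_div_assoc', mul_div_assoc', div_left_inj' hd] at h

theorem eq_div_add_of_mul_eq_mul_one_sub {K : Type*} [Field K] {a b x : K} (hab : a + b ≠ 0)
    (h : a * x = b * (1 - x)) : x = b / (a + b) := by
  rw [eq_div_iff hab]
  linear_combination h

theorem reversible_skew_symmetric_implies_btl_general (n : ℕ)
    (E : Fin n → Fin n → Prop) (hEsymm : ∀ i j, E i j → E j i)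
    (p : Fin n → Fin n → ℝ)
    (d : ℝ) (hd : 0 < d)
    (S : Matrix (Fin n) (Fin n) ℝ)
    (hSoff : ∀ i j, i ≠ j → E i j → S i j = p i j / d)
    (π : Fin n → ℝ) (hπpos : ∀ i, 0 < π i)
    (hRev : ∀ i j, π i * S i j = π j * S j i)
    (hSkew : ∀ i j, i ≠ j → E i j → p i j + p j i = 1) :
    ∀ i j, i ≠ j → E i j → p i j = π j / (π i + π j) := by
  intro i j hij hE
  have hbalance : π i * p i j = π j * p j i := by
    have h := hRev i j
    rw [hSoff i j hij hE, hSoff j i hij.symm (hEsymm i j hE)] at h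
    exact mul_eq_mul_of_mul_div_eq_mul_div hd.ne' h
  have hskew : p j i = 1 - p i j := eq_sub_of_add_eq' (hSkew i j hij hE)
  rw [hskew] at hbalance
  exact eq_div_add_of_mul_eq_mul_one_sub (add_pos (hπpos i) (hπpos j)).ne' hbalance

/-- If the canonical Markov matrix of a pairwise comparison model is irreducible,
aperiodic, with unique stationary distribution `π`, is reversible with respect to `π`,
and the model satisfies translated skew-symmetry, then the model is a BTL model. -/
theorem reversible_skew_symmetric_implies_btl (n : ℕ)
    (E : Fin n → Fin n → Prop) (hEsymm : ∀ i j, E i j → E j i) (hEself : ∀ i, E i i)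
    (p : Fin n → Fin n → ℝ)
    (hp : ∀ i j, i ≠ j → E i j → 0 < p i j ∧ p i j < 1)
    (d : ℝ) (hd : 0 < d)
    (S : Matrix (Fin n) (Fin n) ℝ)
    (hSoff : ∀ i j, i ≠ j → E i j → S i j = p i j / d)
    (hSzero : ∀ i j, i ≠ j → ¬ E i j → S i j = 0)
    (hSdiag : ∀ i, S i i = 1 - ∑ k ∈ Finset.univ \ {i}, S i k)
    (hLazy : ∀ i, (1 : ℝ) / 2 ≤ S i i)
    (hIrred : ∀ i j, ∃ m : ℕ, 0 < (S ^ m) i j)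
    (hAper : ∀ i, 0 < S i i)
    (π : Fin n → ℝ) (hπpos : ∀ i, 0 < π i) (hπsum : ∑ i, π i = 1)
    (hπstat : ∀ j, ∑ i, π i * S i j = π j)
    (hπuniq : ∀ π' : Fin n → ℝ, (∀ i, 0 ≤ π' i) → (∑ i, π' i = 1) →
      (∀ j, ∑ i, π' i * S i j = π' j) → π' = π)
    (hRev : ∀ i j, π i * S i j = π j * S j i)
    (hSkew : ∀ i j, i ≠ j → E i j → p i j + p j i = 1) :
    ∀ i j, i ≠ j → E i j → p i j = π j / (π i + π j) :=
  reversible_skew_symmetric_implies_btl_general n E hEsymm p d hd S hSoff π hπpos hRev hSkew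
end

section
/- Let $E$ be a symmetric edge set on $[n]$ and $P$ a pairwise comparison matrix on $E$ with irreducible aperiodic canonical Markov matrix $S$ and stationary distribution $\pi$ (entrywise positive), and set $\Pi = \mathrm{diag}(\pi)$. Then $P$ corresponds to a BTL model on $E$ if and only if $\Pi P + P \Pi = \mathcal{P}_E(\mathbf{1}_n \pi^T)$, where $\mathcal{P}_E(X)$ denotes the entrywise (Hadamard) product of $X$ with the adjacency matrix of $E$. -/
open Finset

/-- BTL model characterization: a pairwise comparison matrix `P` corresponds to a BTL
model on the edge set `E` iff `Π P + P Π = 𝒫_E(𝟏 πᵀ)`, where `π` is the (unique)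
stationary distribution of the canonical Markov matrix. -/
theorem btl_iff_matrix_characterization (n : ℕ)
    (E : Fin n → Fin n → Prop) [DecidableRel E]
    (hEsymm : ∀ i j, E i j → E j i) (hEself : ∀ i, E i i)
    (P : Matrix (Fin n) (Fin n) ℝ)
    (hPedge : ∀ i j, i ≠ j → E i j → 0 < P i j ∧ P i j < 1)
    (hPdiag : ∀ i, P i i = 1 / 2)
    (hPzero : ∀ i j, i ≠ j → ¬ E i j → P i j = 0)
    (d : ℝ) (hd : 0 < d)
    (S : Matrix (Fin n) (Fin n) ℝ)
    (hSoff : ∀ i j, i ≠ j → E i j → S i j = P i j / d)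
    (hSzero : ∀ i j, i ≠ j → ¬ E i j → S i j = 0)
    (hSdiag : ∀ i, S i i = 1 - ∑ k ∈ Finset.univ \ {i}, S i k)
    (hLazy : ∀ i, (1 : ℝ) / 2 ≤ S i i)
    (hIrred : ∀ i j, ∃ m : ℕ, 0 < (S ^ m) i j)
    (hAper : ∀ i, 0 < S i i)
    (π : Fin n → ℝ) (hπpos : ∀ i, 0 < π i) (hπsum : ∑ i, π i = 1)
    (hπstat : ∀ j, ∑ i, π i * S i j = π j)
    (hπuniq : ∀ π' : Fin n → ℝ, (∀ i, 0 ≤ π' i) → (∑ i, π' i = 1) →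
      (∀ j, ∑ i, π' i * S i j = π' j) → π' = π) :
    (∃ α : Fin n → ℝ, (∀ i, 0 < α i) ∧
      ∀ i j, i ≠ j → E i j → P i j = α j / (α i + α j)) ↔
    Matrix.diagonal π * P + P * Matrix.diagonal π
      = Matrix.of (fun i j => if E i j then π j else 0) := by
  have hn : 0 < n := by
    rcases Nat.eq_zero_or_pos n with h | h
    · subst h; exact absurd hπsum (by simp)
    · exact h
  constructor
  · rintro ⟨α, hαpos, hα⟩
    -- total weight
    set T : ℝ := ∑ k, α k with hT
    have hTpos : 0 < T := Finset.sum_pos (fun k _ => hαpos k) (by simp [Finset.univ_nonempty_iff, Fin.pos_iff_nonempty.mp hn])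
    -- detailed balance
    have hdb : ∀ i j, α i * S i j = α j * S j i := by
      intro i j
      by_cases hij : i = j
      · subst hij; ring
      · by_cases hE : E i j
        · rw [hSoff i j hij hE, hSoff j i (Ne.symm hij) (hEsymm i j hE),
            hα i j hij hE, hα j i (Ne.symm hij) (hEsymm i j hE)]
          have h1 : α i + α j ≠ 0 := by have := hαpos i; have := hαpos j; linarith
          have h2 : α j + α i ≠ 0 := by have := hαpos i; have := hαpos j; linarith
          field_simp
          ring
        · have hE' : ¬ E j i := fun h => hE (hEsymm j i h)
          rw [hSzero i j hij hE, hSzero j i (Ne.symm hij) hE']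
          ring
    -- rows of S sum to 1
    have hrow : ∀ j, ∑ i, S j i = 1 := by
      intro j
      have h1 : ∑ i, S j i = S j j + ∑ i ∈ Finset.univ \ {j}, S j i := by
        rw [Finset.sum_eq_sum_sdiff_singleton_add (Finset.mem_univ j)]
        ring
      rw [h1, hSdiag j]; ring
    -- α / T is stationary
    have hstat : ∀ j, ∑ i, (α i / T) * S i j = α j / T := by
      intro j
      have : ∑ i, α i * S i j = α j := by
        calc ∑ i, α i * S i j = ∑ i, α j * S j i := by
              exact Finset.sum_congr rfl (fun i _ => hdb i j)
          _ = α j * ∑ i, S j i := by rw [Finset.mul_sum]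
          _ = α j := by rw [hrow j, mul_one]
      calc ∑ i, (α i / T) * S i j = (∑ i, α i * S i j) / T := by
            rw [Finset.sum_div]; exact Finset.sum_congr rfl (fun i _ => by ring)
        _ = α j / T := by rw [this]
    have hπeq : (fun i => α i / T) = π := by
      apply hπuniq
      · intro i; exact le_of_lt (div_pos (hαpos i) hTpos)
      · rw [← Finset.sum_div, hT, div_self (ne_of_gt hTpos)]
      · exact hstat
    have hπval : ∀ i, π i = α i / T := fun i => (congrFun hπeq i).symm
    -- now check the matrix identity entrywise
    ext i j
    simp only [Matrix.add_apply, Matrix.diagonal_mul, Matrix.mul_diagonal, Matrix.of_apply]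
    by_cases hij : i = j
    · subst hij
      rw [hPdiag i, if_pos (hEself i)]; ring
    · by_cases hE : E i j
      · rw [if_pos hE, hα i j hij hE, hπval i, hπval j]
        have h1 : α i + α j ≠ 0 := by have := hαpos i; have := hαpos j; linarith
        field_simp
      · rw [if_neg hE, hPzero i j hij hE]; ring
  · intro h
    refine ⟨π, hπpos, fun i j hij hE => ?_⟩
    have := congrFun (congrFun h i) j
    simp only [Matrix.add_apply, Matrix.diagonal_mul, Matrix.mul_diagonal, Matrix.of_apply,
      if_pos hE] at this
    have hsum : 0 < π i + π j := by have := hπpos i; have := hπpos j; linarith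
    field_simp
    linarith [this]
end

section
/- For any matrix $P \in \mathbb{R}^{n\times n}$, any symmetric edge-indicator matrix $E \in \{0,1\}^{n\times n}$ (so that the projection $\mathcal{P}_E(X) = X \odot E$ is Hadamard product), and any vector $\pi \in \mathbb{R}^n$ with strictly positive entries, the following Pythagorean-type identity holds: $\| \Pi P + P \Pi - \mathcal{P}_E(\mathbf{1}_n \pi^T) \|^2_{\pi^{-1},F} = \| \Pi P - P^T \Pi \|^2_{\pi^{-1},F} + \| P + P^T - \mathcal{P}_E(\mathbf{1}_n \mathbf{1}_n^T) \|^2_{\pi,F}$, where $\Pi = \mathrm{diag}(\pi)$, $\|A\|^2_{w,F} = \sum_{i,j} w_j A_{ij}^2$, and it is assumed that $P_{ij} = 0$ whenever $E_{ij} = 0$ (where also $P + P^T - \mathcal{P}_E(\mathbf{1}\mathbf{1}^T)$ vanishes off edges). -/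
open Finset Matrix

/-- Decomposition of the weighted Frobenius norm: the `π⁻¹`-weighted squared Frobenius
norm of `Π P + P Π - 𝒫_E(𝟏 πᵀ)` splits into the `π⁻¹`-weighted squared norm of the
irreversibility part `Π P - Pᵀ Π` plus the `π`-weighted squared norm of the translated
skew-symmetry defect `P + Pᵀ - 𝒫_E(𝟏𝟏ᵀ)`. -/
theorem weighted_frobenius_decomposition (n : ℕ)
    (P E : Matrix (Fin n) (Fin n) ℝ)
    (hE01 : ∀ i j, E i j = 0 ∨ E i j = 1)
    (hEsymm : Eᵀ = E)
    (π : Fin n → ℝ) (hπpos : ∀ i, 0 < π i)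
    (hP0 : ∀ i j, E i j = 0 → P i j = 0) :
    ∑ i, ∑ j, (π j)⁻¹ *
        ((Matrix.diagonal π * P + P * Matrix.diagonal π
          - Matrix.of (fun i j => E i j * π j)) i j) ^ 2
      = (∑ i, ∑ j, (π j)⁻¹ *
          ((Matrix.diagonal π * P - Pᵀ * Matrix.diagonal π) i j) ^ 2)
        + ∑ i, ∑ j, π j * ((P + Pᵀ - E) i j) ^ 2 := by
  have hE : ∀ i j, E j i = E i j := fun i j => by
    conv_lhs => rw [← hEsymm]
    rw [Matrix.transpose_apply]
  have key : ∀ i j : Fin n, (π j)⁻¹ *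
      ((Matrix.diagonal π * P + P * Matrix.diagonal π
        - Matrix.of (fun i j => E i j * π j)) i j) ^ 2
    = ((π j)⁻¹ * ((Matrix.diagonal π * P - Pᵀ * Matrix.diagonal π) i j) ^ 2
        + π j * ((P + Pᵀ - E) i j) ^ 2)
      + 2 * ((π i * P i j - π j * P j i) * (P i j + P j i - E i j)) := by
    intro i j
    have hj : (π j) ≠ 0 := (hπpos j).ne'
    simp only [Matrix.add_apply, Matrix.sub_apply, Matrix.diagonal_mul,
      Matrix.mul_diagonal, Matrix.transpose_apply, Matrix.of_apply]
    field_simp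
    ring
  have cross : ∑ i, ∑ j, 2 * ((π i * P i j - π j * P j i) * (P i j + P j i - E i j))
      = 0 := by
    have h1 : ∑ i, ∑ j, 2 * ((π i * P i j - π j * P j i) * (P i j + P j i - E i j))
        = ∑ i, ∑ j, -(2 * ((π i * P i j - π j * P j i) * (P i j + P j i - E i j))) := by
      rw [Finset.sum_comm]
      refine Finset.sum_congr rfl fun i _ => Finset.sum_congr rfl fun j _ => ?_
      rw [hE i j]
      ring
    have := h1
    rw [Finset.sum_congr rfl fun i _ => Finset.sum_neg_distrib _, Finset.sum_neg_distrib] at this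
    linarith
  simp_rw [key, Finset.sum_add_distrib]
  rw [cross, add_zero]
end

section
/- Let $S \in \mathbb{R}^{n\times n}$ ($n \ge 2$) be the canonical Markov matrix of a pairwise comparison model on the complete graph with $d = 2n$: $S_{ij} = p_{ij}/(2n)$ for $i \ne j$ and $S_{ii} = 1 - \frac{1}{2n}\sum_{k \ne i} p_{ik}$, where all $p_{ij} \in [\frac{\delta}{1+\delta}, \frac{1}{1+\delta}]$ for some $\delta \in (0,1)$. If $\pi$ is a stationary distribution of $S$ (which is entrywise positive), then the principal ratio satisfies $\max_i \pi_i / \min_j \pi_j \le 1/\delta^2$. -/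
open Finset

/-!
Stationarity of `S` is the global balance equation
`∑_{k ≠ a} π k * p k a = π a * ∑_{k ≠ a} p a k`. Bounding every rate between `δ/(1+δ)` and
`1/(1+δ)` on both sides gives `δ (1 - π a) ≤ (n - 1) π a` and `(n - 1) δ π a ≤ 1 - π a` for
every `a`. If `π i > π j`, chaining the second bound at `i` with the first at `j` through
`1 - π i < 1 - π j` yields `δ² π i ≤ π j`; otherwise the ratio is at most `1 ≤ 1/δ²`.
-/

section Balance

variable {ι : Type*} [Fintype ι] [DecidableEq ι]

theorem balance_of_stationary {c : ℝ} (hc : c ≠ 0) {p : ι → ι → ℝ} {S : Matrix ι ι ℝ}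
    (hSoff : ∀ i j, i ≠ j → S i j = p i j / c)
    (hSdiag : ∀ i, S i i = 1 - (∑ k ∈ univ \ {i}, p i k) / c)
    {π : ι → ℝ} (hπstat : ∀ j, ∑ i, π i * S i j = π j) (a : ι) :
    ∑ k ∈ univ \ {a}, π k * p k a = π a * ∑ k ∈ univ \ {a}, p a k := by
  have hstat := hπstat a
  rw [sum_eq_sum_sdiff_singleton_add (mem_univ a), hSdiag a,
    sum_congr rfl fun k hk => by
      rw [hSoff k a (by simpa using hk), mul_div_assoc']] at hstat
  rw [← sum_div] at hstat
  field_simp at hstat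
  linarith

theorem sum_compl_singleton_eq_one_sub {π : ι → ℝ} (hπsum : ∑ i, π i = 1) (a : ι) :
    ∑ k ∈ univ \ {a}, π k = 1 - π a := by
  rw [← hπsum, sum_eq_sum_sdiff_singleton_add (mem_univ a)]
  ring

theorem stationary_mass_bounds {lo hi : ℝ} {p : ι → ι → ℝ}
    (hp : ∀ i j, i ≠ j → lo ≤ p i j ∧ p i j ≤ hi)
    {π : ι → ℝ} (hπ : ∀ i, 0 ≤ π i) (hπsum : ∑ i, π i = 1)
    (hbal : ∀ a, ∑ k ∈ univ \ {a}, π k * p k a = π a * ∑ k ∈ univ \ {a}, p a k) (a : ι) :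
    lo * (1 - π a) ≤ hi * (((Fintype.card ι : ℝ) - 1) * π a) ∧
      lo * (((Fintype.card ι : ℝ) - 1) * π a) ≤ hi * (1 - π a) := by
  have hcard : ((univ \ {a} : Finset ι).card : ℝ) = (Fintype.card ι : ℝ) - 1 := by
    rw [card_sdiff_of_subset (subset_univ _), card_singleton, card_univ,
      Nat.cast_sub (Fintype.card_pos_iff.2 ⟨a⟩)]
    simp
  have hne : ∀ k ∈ univ \ {a}, k ≠ a := fun k hk => by simpa using hk
  have hin_lo : lo * (1 - π a) ≤ ∑ k ∈ univ \ {a}, π k * p k a := by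
    rw [← sum_compl_singleton_eq_one_sub hπsum a, mul_sum]
    exact sum_le_sum fun k hk => by
      rw [mul_comm lo]; exact mul_le_mul_of_nonneg_left (hp k a (hne k hk)).1 (hπ k)
  have hin_hi : ∑ k ∈ univ \ {a}, π k * p k a ≤ hi * (1 - π a) := by
    rw [← sum_compl_singleton_eq_one_sub hπsum a, mul_sum]
    exact sum_le_sum fun k hk => by
      rw [mul_comm hi]; exact mul_le_mul_of_nonneg_left (hp k a (hne k hk)).2 (hπ k)
  have hout_lo : ((Fintype.card ι : ℝ) - 1) * lo ≤ ∑ k ∈ univ \ {a}, p a k := by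
    rw [← hcard, ← nsmul_eq_mul, ← sum_const]
    exact sum_le_sum fun k hk => (hp a k (hne k hk).symm).1
  have hout_hi : ∑ k ∈ univ \ {a}, p a k ≤ ((Fintype.card ι : ℝ) - 1) * hi := by
    rw [← hcard, ← nsmul_eq_mul, ← sum_const]
    exact sum_le_sum fun k hk => (hp a k (hne k hk).symm).2
  constructor
  · nlinarith [hbal a, mul_le_mul_of_nonneg_left hout_hi (hπ a)]
  · nlinarith [hbal a, mul_le_mul_of_nonneg_left hout_lo (hπ a)]

end Balance

theorem div_le_one_div_sq_of_mass_bounds {m δ x y : ℝ} (hm : 0 < m) (hδ0 : 0 < δ)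
    (hδ1 : δ ≤ 1) (hx : 0 < x) (hy : 0 < y)
    (hxup : m * x * δ ≤ 1 - x) (hylow : δ * (1 - y) ≤ m * y) :
    x / y ≤ 1 / δ ^ 2 := by
  rw [div_le_div_iff₀ hy (by positivity), one_mul]
  rcases le_or_gt x y with hle | hlt
  · nlinarith [mul_le_mul_of_nonneg_left hδ1 hx.le]
  · -- `m x δ² ≤ δ (1 - x) ≤ δ (1 - y) ≤ m y`
    have : m * (x * δ ^ 2) ≤ m * y := by nlinarith
    exact le_of_mul_le_mul_left this hm

/-- Principal ratio bound for complete graphs: for the canonical Markov matrix of a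
pairwise comparison model on the complete graph (with `d = 2n`) satisfying the dynamic
range assumption, any (entrywise positive) stationary distribution `π` satisfies
`max_i π_i / min_j π_j ≤ 1/δ²`. -/
theorem principal_ratio_complete_graph (n : ℕ) (hn : 2 ≤ n)
    (δ : ℝ) (hδ0 : 0 < δ) (hδ1 : δ < 1)
    (p : Fin n → Fin n → ℝ)
    (hp : ∀ i j, i ≠ j → δ / (1 + δ) ≤ p i j ∧ p i j ≤ 1 / (1 + δ))
    (S : Matrix (Fin n) (Fin n) ℝ)
    (hSoff : ∀ i j, i ≠ j → S i j = p i j / (2 * n))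
    (hSdiag : ∀ i, S i i = 1 - (∑ k ∈ Finset.univ \ {i}, p i k) / (2 * n))
    (π : Fin n → ℝ) (hπpos : ∀ i, 0 < π i) (hπsum : ∑ i, π i = 1)
    (hπstat : ∀ j, ∑ i, π i * S i j = π j) :
    ∀ i j, π i / π j ≤ 1 / δ ^ 2 := by
  intro i j
  have hbal := balance_of_stationary (by positivity) hSoff hSdiag hπstat
  have hbounds := stationary_mass_bounds hp (fun i => (hπpos i).le) hπsum hbal
  rw [Fintype.card_fin] at hbounds
  have hm : (0 : ℝ) < n - 1 := by
    have : (2 : ℝ) ≤ n := by exact_mod_cast hn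
    linarith
  have hδ : 0 < 1 + δ := by linarith
  refine div_le_one_div_sq_of_mass_bounds hm hδ0 hδ1.le (hπpos i) (hπpos j) ?_ ?_
  · have := (hbounds i).2
    field_simp at this
    linarith
  · have := (hbounds j).1
    field_simp at this
    linarith
end

section
/- Let $S \in \mathbb{R}^{n\times n}$ be the canonical Markov matrix of a pairwise comparison model on the complete graph with $d = 2n$, where all off-diagonal comparison probabilities satisfy $\frac{\delta}{1+\delta} \le p_{ij} \le \frac{1}{1+\delta}$ for some $\delta \in (0,1)$. Then the Dobrushin contraction coefficient $\eta_{TV}(S) = \max_{i,j} \|S_{i,:} - S_{j,:}\|_{TV}$ satisfies $\eta_{TV}(S) \le 1 - \frac{\delta}{2(1+\delta)}$, where $\|u - v\|_{TV} = 1 - \sum_k \min(u_k, v_k)$ for probability vectors $u, v$. -/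
open Finset

/-- Dobrushin contraction coefficient bound for complete graphs: under the dynamic
range assumption, `η_TV(S) = max_{i,j} ‖S_{i,:} - S_{j,:}‖_TV ≤ 1 - δ/(2(1+δ))`,
where `‖u - v‖_TV = 1 - ∑ₖ min(uₖ, vₖ)`. -/
theorem dobrushin_coefficient_complete_graph (n : ℕ) (hn : 2 ≤ n)
    (δ : ℝ) (hδ0 : 0 < δ) (hδ1 : δ < 1)
    (p : Fin n → Fin n → ℝ)
    (hp : ∀ i j, i ≠ j → δ / (1 + δ) ≤ p i j ∧ p i j ≤ 1 / (1 + δ))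
    (S : Matrix (Fin n) (Fin n) ℝ)
    (hSoff : ∀ i j, i ≠ j → S i j = p i j / (2 * n))
    (hSdiag : ∀ i, S i i = 1 - (∑ k ∈ Finset.univ \ {i}, p i k) / (2 * n)) :
    ∀ i j, 1 - ∑ k, min (S i k) (S j k) ≤ 1 - δ / (2 * (1 + δ)) := by
  have hδp : (0:ℝ) < 1 + δ := by linarith
  have hn0 : (0:ℝ) < n := by
    have : (2:ℝ) ≤ n := by exact_mod_cast hn
    linarith
  have h2n : (0:ℝ) < 2 * n := by linarith
  have hn2 : (2:ℝ) ≤ n := by exact_mod_cast hn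
  set c : ℝ := δ / ((1 + δ) * (2 * n)) with hc_def
  have hcpos : 0 < c := by positivity
  have hc_half : c ≤ 1 / 2 := by
    rw [hc_def, div_le_iff₀ (by positivity)]
    nlinarith [mul_pos hδ0 hn0]
  have hS : ∀ a b, c ≤ S a b := by
    intro a b
    rcases eq_or_ne a b with rfl | hab
    · rw [hSdiag]
      have hsum : ∑ k ∈ Finset.univ \ {a}, p a k ≤ (n : ℝ) := by
        calc ∑ k ∈ Finset.univ \ {a}, p a k
            ≤ ∑ k ∈ Finset.univ \ {a}, (1 / (1 + δ)) := by
              apply Finset.sum_le_sum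
              intro k hk
              have hka : a ≠ k := by
                simp only [Finset.mem_sdiff, Finset.mem_singleton] at hk
                exact fun h => hk.2 h.symm
              exact (hp a k hka).2
          _ = ((Finset.univ \ {a}).card : ℝ) * (1 / (1 + δ)) := by
              rw [Finset.sum_const, nsmul_eq_mul]
          _ ≤ (n : ℝ) * 1 := by
              apply mul_le_mul
              · have : ((Finset.univ \ {a}).card : ℕ) ≤ n := by
                  calc (Finset.univ \ {a}).card ≤ (Finset.univ : Finset (Fin n)).card :=
                        Finset.card_le_card (Finset.sdiff_subset)
                    _ = n := by simp
                exact_mod_cast this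
              · rw [div_le_one hδp]; linarith
              · positivity
              · positivity
          _ = (n : ℝ) := mul_one _
      have hdiv : (∑ k ∈ Finset.univ \ {a}, p a k) / (2 * n) ≤ 1 / 2 := by
        rw [div_le_iff₀ h2n]
        linarith
      linarith
    · rw [hSoff a b hab]
      have := (hp a b hab).1
      rw [hc_def, ← div_div]
      gcongr
  intro i j
  have hterm : ∀ k : Fin n, c ≤ min (S i k) (S j k) := fun k => le_min (hS i k) (hS j k)
  have hsum : (n : ℝ) * c ≤ ∑ k, min (S i k) (S j k) := by
    calc (n : ℝ) * c = ∑ _k : Fin n, c := by rw [Finset.sum_const, nsmul_eq_mul]; simp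
      _ ≤ ∑ k, min (S i k) (S j k) := Finset.sum_le_sum fun k _ => hterm k
  have hnc : (n : ℝ) * c = δ / (2 * (1 + δ)) := by
    rw [hc_def]
    field_simp
  linarith [hsum, hnc ▸ hsum]
end

section
/- Let $R \in \mathbb{R}^{n \times n}$ be a nonnegative matrix with $R_{ii} \ge 1/2$ for all $i$ (i.e., $2R - I$ is entrywise nonnegative), and suppose $\|2R - I\|_2 \le 1$. Then for every vector $x \in \mathbb{R}^n$, $x^T R R^T x \le \frac{1}{2} x^T (R + R^T) x$. Consequently $\lambda_2(RR^T) \le \lambda_2(\frac{R + R^T}{2})$ when both matrices share the top eigenvector. -/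
/-!
With `A = 2R - I` one has `RRᵀ = (R + Rᵀ)/2 + (AAᵀ - I)/4`. Since `‖Aᵀ‖₂ = ‖A‖₂ ≤ 1`, the
quadratic form of `AAᵀ - I`, namely `‖Aᵀx‖² - ‖x‖²`, is nonpositive, which gives the quadratic
form inequality. Comparing the forms pointwise on the unit vectors orthogonal to `v` compares
their suprema, the right-hand one being bounded since `xᵀRx = (xᵀAx + ‖x‖²)/2 ≤ ‖x‖²`.
-/

open Finset Matrix

section LinearOrderedField

variable {K ι : Type*} [Field K] [LinearOrder K] [IsStrictOrderedRing K] [Fintype ι]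

theorem dotProduct_self_nonneg (x : ι → K) : 0 ≤ x ⬝ᵥ x :=
  Fintype.sum_nonneg fun i => mul_self_nonneg (x i)

theorem dotProduct_sq_le (x y : ι → K) : (x ⬝ᵥ y) ^ 2 ≤ (x ⬝ᵥ x) * (y ⬝ᵥ y) := by
  simpa only [dotProduct, sq] using sum_mul_sq_le_sq_mul_sq univ x y

end LinearOrderedField

theorem dotProduct_self_eq_sum_sq {R ι : Type*} [CommSemiring R] [Fintype ι] (x : ι → R) :
    x ⬝ᵥ x = ∑ i, x i ^ 2 := by
  simp only [dotProduct, sq]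

theorem Real.sSup_le_sSup_of_forall_le {α : Type*} {p : α → Prop} {f g : α → ℝ}
    (hfg : ∀ x, p x → f x ≤ g x) (hg : BddAbove {r | ∃ x, p x ∧ r = g x}) :
    sSup {r | ∃ x, p x ∧ r = f x} ≤ sSup {r | ∃ x, p x ∧ r = g x} := by
  by_cases hp : ∃ x, p x
  · obtain ⟨x₀, hx₀⟩ := hp
    refine csSup_le ⟨f x₀, x₀, hx₀, rfl⟩ ?_
    rintro _ ⟨x, hx, rfl⟩
    exact (hfg x hx).trans (le_csSup hg ⟨x, hx, rfl⟩)
  · -- both sets are empty, with the junk supremum `0`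
    simp only [not_exists] at hp
    simp [hp]

namespace Matrix

section Field

variable {K ι : Type*} [Field K] [Fintype ι]

theorem dotProduct_mul_transpose_mulVec {m : Type*} [Fintype m] (M : Matrix ι m K) (x : ι → K) :
    x ⬝ᵥ (M * Mᵀ) *ᵥ x = Mᵀ *ᵥ x ⬝ᵥ Mᵀ *ᵥ x := by
  rw [← mulVec_mulVec, dotProduct_transpose_mulVec]

variable [CharZero K]

theorem dotProduct_symm_mulVec (M : Matrix ι ι K) (x : ι → K) :
    x ⬝ᵥ ((2⁻¹ : K) • (M + Mᵀ)) *ᵥ x = x ⬝ᵥ M *ᵥ x := by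
  rw [smul_mulVec, add_mulVec, dotProduct_smul, dotProduct_add, dotProduct_transpose_mulVec,
    smul_eq_mul]
  ring

theorem mul_transpose_eq_symm_add [DecidableEq ι] (R : Matrix ι ι K) :
    R * Rᵀ = (2⁻¹ : K) • (R + Rᵀ) +
      (4⁻¹ : K) • (((2 : K) • R - 1) * ((2 : K) • R - 1)ᵀ - 1) := by
  simp only [transpose_sub, transpose_smul, transpose_one, sub_mul, mul_sub, smul_mul_assoc,
    mul_smul_comm, mul_one, one_mul]
  module

end Field

section LinearOrderedField

variable {K ι : Type*} [Field K] [LinearOrder K] [IsStrictOrderedRing K] [Fintype ι]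

section Contraction

variable {A : Matrix ι ι K} (hA : ∀ x, A *ᵥ x ⬝ᵥ A *ᵥ x ≤ x ⬝ᵥ x)
include hA

theorem transpose_mulVec_dotProduct_self_le (x : ι → K) : Aᵀ *ᵥ x ⬝ᵥ Aᵀ *ᵥ x ≤ x ⬝ᵥ x := by
  set y := Aᵀ *ᵥ x
  have hcs : (y ⬝ᵥ y) ^ 2 ≤ (x ⬝ᵥ x) * (y ⬝ᵥ y) :=
    calc (y ⬝ᵥ y) ^ 2 = (x ⬝ᵥ A *ᵥ y) ^ 2 := by rw [dotProduct_transpose_mulVec]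
      _ ≤ (x ⬝ᵥ x) * (A *ᵥ y ⬝ᵥ A *ᵥ y) := dotProduct_sq_le _ _
      _ ≤ (x ⬝ᵥ x) * (y ⬝ᵥ y) := mul_le_mul_of_nonneg_left (hA y) (dotProduct_self_nonneg x)
  nlinarith [dotProduct_self_nonneg y, dotProduct_self_nonneg x]

theorem dotProduct_mulVec_le_dotProduct_self (x : ι → K) : x ⬝ᵥ A *ᵥ x ≤ x ⬝ᵥ x := by
  refine (le_abs_self _).trans (abs_le_of_sq_le_sq ?_ (dotProduct_self_nonneg x))
  calc (x ⬝ᵥ A *ᵥ x) ^ 2 ≤ (x ⬝ᵥ x) * (A *ᵥ x ⬝ᵥ A *ᵥ x) := dotProduct_sq_le _ _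
    _ ≤ (x ⬝ᵥ x) ^ 2 := by
      rw [sq]
      exact mul_le_mul_of_nonneg_left (hA x) (dotProduct_self_nonneg x)

end Contraction

variable [DecidableEq ι] {R : Matrix ι ι K}
  (hR : ∀ x, ((2 : K) • R - 1) *ᵥ x ⬝ᵥ ((2 : K) • R - 1) *ᵥ x ≤ x ⬝ᵥ x)
include hR

theorem dotProduct_mul_transpose_mulVec_le (x : ι → K) :
    x ⬝ᵥ (R * Rᵀ) *ᵥ x ≤ x ⬝ᵥ ((2⁻¹ : K) • (R + Rᵀ)) *ᵥ x := by
  have hAT := transpose_mulVec_dotProduct_self_le hR x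
  rw [mul_transpose_eq_symm_add R, add_mulVec, dotProduct_add, smul_mulVec (4⁻¹ : K),
    sub_mulVec, one_mulVec, dotProduct_smul, dotProduct_sub, dotProduct_mul_transpose_mulVec,
    smul_eq_mul]
  linarith

theorem dotProduct_symm_mulVec_le (x : ι → K) :
    x ⬝ᵥ ((2⁻¹ : K) • (R + Rᵀ)) *ᵥ x ≤ x ⬝ᵥ x := by
  have hA := dotProduct_mulVec_le_dotProduct_self hR x
  rw [sub_mulVec, smul_mulVec, one_mulVec, dotProduct_sub, dotProduct_smul, smul_eq_mul] at hA
  rw [dotProduct_symm_mulVec]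
  linarith

end LinearOrderedField

end Matrix

theorem lazy_quadratic_form_bound_general (n : ℕ) (R : Matrix (Fin n) (Fin n) ℝ)
    (hnorm : ∀ x : Fin n → ℝ,
      ∑ i, ((((2 : ℝ) • R - 1) *ᵥ x) i) ^ 2 ≤ ∑ i, (x i) ^ 2) :
    (∀ x : Fin n → ℝ,
      x ⬝ᵥ ((R * Rᵀ) *ᵥ x) ≤ (1 / 2) * (x ⬝ᵥ ((R + Rᵀ) *ᵥ x))) ∧
    (∀ v : Fin n → ℝ,
      sSup {r : ℝ | ∃ x : Fin n → ℝ, (∑ i, (x i) ^ 2) = 1 ∧ x ⬝ᵥ v = 0 ∧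
          r = x ⬝ᵥ ((R * Rᵀ) *ᵥ x)}
        ≤ sSup {r : ℝ | ∃ x : Fin n → ℝ, (∑ i, (x i) ^ 2) = 1 ∧ x ⬝ᵥ v = 0 ∧
            r = x ⬝ᵥ (((2⁻¹ : ℝ) • (R + Rᵀ)) *ᵥ x)}) := by
  have hR : ∀ x : Fin n → ℝ,
      ((2 : ℝ) • R - 1) *ᵥ x ⬝ᵥ ((2 : ℝ) • R - 1) *ᵥ x ≤ x ⬝ᵥ x := by
    simpa only [dotProduct_self_eq_sum_sq] using hnorm
  refine ⟨fun x => ?_, fun v => ?_⟩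
  · simpa only [smul_mulVec, dotProduct_smul, smul_eq_mul, one_div]
      using dotProduct_mul_transpose_mulVec_le hR x
  have hbdd : BddAbove {r : ℝ | ∃ x : Fin n → ℝ, ((∑ i, (x i) ^ 2) = 1 ∧ x ⬝ᵥ v = 0) ∧
      r = x ⬝ᵥ (((2⁻¹ : ℝ) • (R + Rᵀ)) *ᵥ x)} := by
    refine ⟨1, ?_⟩
    rintro _ ⟨x, ⟨hx, -⟩, rfl⟩
    simpa only [dotProduct_self_eq_sum_sq, hx] using dotProduct_symm_mulVec_le hR x
  simpa only [and_assoc] using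
    Real.sSup_le_sSup_of_forall_le (fun x _ => dotProduct_mul_transpose_mulVec_le hR x) hbdd

/-- For a nonnegative `½`-lazy matrix `R` with `‖2R - I‖₂ ≤ 1`, the quadratic form of
`RRᵀ` is dominated by that of `(R + Rᵀ)/2`; consequently the second-largest
eigenvalues (restricted to the orthogonal complement of any shared top eigenvector `v`)
compare accordingly. -/
theorem lazy_quadratic_form_bound (n : ℕ) (R : Matrix (Fin n) (Fin n) ℝ)
    (hRnn : ∀ i j, 0 ≤ R i j)
    (hLazy : ∀ i, (1 : ℝ) / 2 ≤ R i i)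
    (hnorm : ∀ x : Fin n → ℝ,
      ∑ i, ((((2 : ℝ) • R - 1) *ᵥ x) i) ^ 2 ≤ ∑ i, (x i) ^ 2) :
    (∀ x : Fin n → ℝ,
      x ⬝ᵥ ((R * Rᵀ) *ᵥ x) ≤ (1 / 2) * (x ⬝ᵥ ((R + Rᵀ) *ᵥ x))) ∧
    (∀ v : Fin n → ℝ,
      sSup {r : ℝ | ∃ x : Fin n → ℝ, (∑ i, (x i) ^ 2) = 1 ∧ x ⬝ᵥ v = 0 ∧
          r = x ⬝ᵥ ((R * Rᵀ) *ᵥ x)}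
        ≤ sSup {r : ℝ | ∃ x : Fin n → ℝ, (∑ i, (x i) ^ 2) = 1 ∧ x ⬝ᵥ v = 0 ∧
            r = x ⬝ᵥ (((2⁻¹ : ℝ) • (R + Rᵀ)) *ᵥ x)}) :=
  lazy_quadratic_form_bound_general n R hnorm
end

section
/- Let $\pi, \hat\pi, \tilde\pi$ be stationary distributions (row vectors with $\pi^T S = \pi^T$, etc.) of row-stochastic matrices $S, \hat{S}, \tilde{S} \in \mathbb{R}^{n\times n}$ respectively, with $\pi$ entrywise positive. If $\| \Pi^{1/2} S \Pi^{-1/2} - \sqrt{\pi}\sqrt{\pi}^T \|_2 + \| S - \hat{S} \|_{\pi^{-1}} < 1$, then $\| \hat\pi - \tilde\pi \|_{\pi^{-1}} \le \frac{\| \tilde\pi^T (\tilde{S} - \hat{S}) \|_{\pi^{-1}}}{1 - \| \Pi^{1/2} S \Pi^{-1/2} - \sqrt{\pi}\sqrt{\pi}^T \|_2 - \| S - \hat{S} \|_{\pi^{-1}}}$. -/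
open Finset Matrix

/-- The `π⁻¹`-weighted Euclidean norm `‖x‖_{π⁻¹} = (∑ᵢ xᵢ²/πᵢ)^{1/2}`. -/
noncomputable def piInvNorm {n : ℕ} (π : Fin n → ℝ) (x : Fin n → ℝ) : ℝ :=
  Real.sqrt (∑ i, (x i) ^ 2 / π i)

/-- The operator norm induced by `‖·‖_{π⁻¹}` (acting by `x ↦ xᵀA`). -/
noncomputable def piInvOpNorm {n : ℕ} (π : Fin n → ℝ) (A : Matrix (Fin n) (Fin n) ℝ) : ℝ :=
  sSup {r : ℝ | ∃ x : Fin n → ℝ, piInvNorm π x = 1 ∧ r = piInvNorm π (Matrix.vecMul x A)}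

/-- The spectral (operator ℓ²→ℓ²) norm of a matrix. -/
noncomputable def spec2Norm {n : ℕ} (M : Matrix (Fin n) (Fin n) ℝ) : ℝ :=
  sSup {r : ℝ | ∃ x : Fin n → ℝ, (∑ i, (x i) ^ 2) = 1 ∧
    r = Real.sqrt (∑ i, ((M *ᵥ x) i) ^ 2)}


noncomputable def en {n : ℕ} (y : Fin n → ℝ) : ℝ := Real.sqrt (∑ i, y i ^ 2)

lemma en_nonneg {n : ℕ} (y : Fin n → ℝ) : 0 ≤ en y := Real.sqrt_nonneg _

lemma en_sq {n : ℕ} (y : Fin n → ℝ) : en y ^ 2 = ∑ i, y i ^ 2 := by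
  rw [en, Real.sq_sqrt (by positivity)]

lemma en_cs {n : ℕ} (y z : Fin n → ℝ) : ∑ i, y i * z i ≤ en y * en z :=
  Real.sum_mul_le_sqrt_mul_sqrt _ _ _

lemma en_add_le {n : ℕ} (y z : Fin n → ℝ) : en (fun i => y i + z i) ≤ en y + en z := by
  have hexp : ∑ i, (y i + z i) ^ 2
      = (∑ i, y i ^ 2) + 2 * (∑ i, y i * z i) + ∑ i, z i ^ 2 := by
    rw [Finset.mul_sum, ← Finset.sum_add_distrib, ← Finset.sum_add_distrib]
    exact Finset.sum_congr rfl fun i _ => by ring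
  have h1 : ∑ i, (y i + z i) ^ 2 ≤ (en y + en z) ^ 2 := by
    have := en_cs y z
    have hy := en_sq y
    have hz := en_sq z
    nlinarith [en_nonneg y, en_nonneg z]
  calc en (fun i => y i + z i) = Real.sqrt (∑ i, (y i + z i) ^ 2) := rfl
    _ ≤ Real.sqrt ((en y + en z) ^ 2) := Real.sqrt_le_sqrt h1
    _ = en y + en z := Real.sqrt_sq (by have := en_nonneg y; have := en_nonneg z; linarith)

lemma en_eq_zero {n : ℕ} {y : Fin n → ℝ} (h : en y = 0) : y = 0 := by
  have hs : ∑ i, y i ^ 2 = 0 := by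
    have := Real.sqrt_eq_zero (by positivity : (0:ℝ) ≤ ∑ i, y i ^ 2) |>.mp h
    exact this
  funext i
  have := (Finset.sum_eq_zero_iff_of_nonneg (fun i _ => sq_nonneg (y i))).mp hs i (mem_univ i)
  exact pow_eq_zero_iff (two_ne_zero) |>.mp this

lemma en_div {n : ℕ} (y : Fin n → ℝ) {t : ℝ} (ht : 0 < t) :
    en (fun i => y i / t) = en y / t := by
  rw [en, en]
  have : ∑ i, (y i / t) ^ 2 = (∑ i, y i ^ 2) / t ^ 2 := by
    rw [Finset.sum_div]; exact Finset.sum_congr rfl fun i _ => by rw [div_pow]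
  rw [this, Real.sqrt_div (by positivity), Real.sqrt_sq ht.le]

lemma mulVec_apply' {n : ℕ} (M : Matrix (Fin n) (Fin n) ℝ) (x : Fin n → ℝ) (i : Fin n) :
    (M *ᵥ x) i = ∑ j, M i j * x j := rfl

lemma vecMul_apply' {n : ℕ} (M : Matrix (Fin n) (Fin n) ℝ) (x : Fin n → ℝ) (j : Fin n) :
    (Matrix.vecMul x M) j = ∑ i, x i * M i j := rfl

lemma spec2_bddAbove {n : ℕ} (M : Matrix (Fin n) (Fin n) ℝ) :
    BddAbove {r : ℝ | ∃ x : Fin n → ℝ, (∑ i, (x i) ^ 2) = 1 ∧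
      r = Real.sqrt (∑ i, ((M *ᵥ x) i) ^ 2)} := by
  refine ⟨Real.sqrt (∑ i, ∑ j, M i j ^ 2), ?_⟩
  rintro r ⟨x, hx, rfl⟩
  apply Real.sqrt_le_sqrt
  refine Finset.sum_le_sum fun i _ => ?_
  rw [mulVec_apply']
  calc (∑ j, M i j * x j) ^ 2 ≤ (∑ j, M i j ^ 2) * ∑ j, x j ^ 2 :=
        Finset.sum_mul_sq_le_sq_mul_sq _ _ _
    _ = ∑ j, M i j ^ 2 := by rw [hx, mul_one]

lemma spec2_en_mem {n : ℕ} (M : Matrix (Fin n) (Fin n) ℝ) (x : Fin n → ℝ)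
    (hx : (∑ i, (x i) ^ 2) = 1) : en (M *ᵥ x) ≤ spec2Norm M :=
  le_csSup (spec2_bddAbove M) ⟨x, hx, rfl⟩

lemma spec2_nonneg {n : ℕ} (hn : 0 < n) (M : Matrix (Fin n) (Fin n) ℝ) :
    0 ≤ spec2Norm M := by
  set x : Fin n → ℝ := fun i => if i = ⟨0, hn⟩ then 1 else 0 with hxdef
  have hx : ∑ i, (x i) ^ 2 = 1 := by simp [hxdef]
  exact le_trans (en_nonneg (M *ᵥ x)) (spec2_en_mem M x hx)

lemma spec2_apply_le {n : ℕ} (M : Matrix (Fin n) (Fin n) ℝ) (x : Fin n → ℝ) :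
    en (M *ᵥ x) ≤ spec2Norm M * en x := by
  by_cases hx : en x = 0
  · have : x = 0 := en_eq_zero hx
    subst this
    have h0 : en (0 : Fin n → ℝ) = 0 := by simp [en]
    simp [Matrix.mulVec_zero, h0, hx]
  · have ht : 0 < en x := lt_of_le_of_ne (en_nonneg x) (Ne.symm hx)
    set t := en x with htdef
    have hx1 : ∑ i, ((fun i => x i / t) i) ^ 2 = 1 := by
      have : ∑ i, (x i / t) ^ 2 = (∑ i, x i ^ 2) / t ^ 2 := by
        rw [Finset.sum_div]; exact Finset.sum_congr rfl fun i _ => by rw [div_pow]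
      simp only [this, ← en_sq x, ← htdef]
      exact div_self (by positivity)
    have hmv : M *ᵥ (fun i => x i / t) = fun i => (M *ᵥ x) i / t := by
      funext i
      rw [mulVec_apply', mulVec_apply', Finset.sum_div]
      exact Finset.sum_congr rfl fun j _ => by ring
    have := spec2_en_mem M (fun i => x i / t) hx1
    rw [hmv, en_div _ ht] at this
    calc en (M *ᵥ x) = (en (M *ᵥ x) / t) * t := by field_simp
      _ ≤ spec2Norm M * t := by
          exact mul_le_mul_of_nonneg_right this ht.le

lemma spec2_vecMul_le {n : ℕ} (hn : 0 < n) (M : Matrix (Fin n) (Fin n) ℝ) (y : Fin n → ℝ) :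
    en (Matrix.vecMul y M) ≤ spec2Norm M * en y := by
  set z := Matrix.vecMul y M with hzdef
  have hz : ∑ j, z j ^ 2 = ∑ i, y i * (M *ᵥ z) i := by
    calc ∑ j, z j ^ 2 = ∑ j, ∑ i, y i * M i j * z j := by
          refine Finset.sum_congr rfl fun j _ => ?_
          rw [pow_two, hzdef, vecMul_apply', Finset.sum_mul]
      _ = ∑ i, ∑ j, y i * M i j * z j := Finset.sum_comm
      _ = ∑ i, y i * (M *ᵥ z) i := by
          refine Finset.sum_congr rfl fun i _ => ?_
          rw [mulVec_apply', Finset.mul_sum]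
          exact Finset.sum_congr rfl fun j _ => by ring
  have hcs : ∑ i, y i * (M *ᵥ z) i ≤ en y * en (M *ᵥ z) := en_cs _ _
  have hsp : en (M *ᵥ z) ≤ spec2Norm M * en z := spec2_apply_le M z
  have key : en z ^ 2 ≤ en y * (spec2Norm M * en z) := by
    rw [en_sq, hz]
    exact le_trans hcs (mul_le_mul_of_nonneg_left hsp (en_nonneg y))
  by_cases hez : en z = 0
  · rw [hez]
    exact mul_nonneg (spec2_nonneg hn M) (en_nonneg y)
  · have hez' : 0 < en z := lt_of_le_of_ne (en_nonneg z) (Ne.symm hez)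
    nlinarith [en_nonneg y, spec2_nonneg hn M]

lemma piInvNorm_eq_en {n : ℕ} {π : Fin n → ℝ} (hπ : ∀ i, 0 < π i) (x : Fin n → ℝ) :
    piInvNorm π x = en (fun i => x i / Real.sqrt (π i)) := by
  rw [piInvNorm, en]
  congr 1
  refine Finset.sum_congr rfl fun i _ => ?_
  rw [div_pow, Real.sq_sqrt (hπ i).le]

lemma piInvNorm_nonneg {n : ℕ} (π x : Fin n → ℝ) : 0 ≤ piInvNorm π x := Real.sqrt_nonneg _

lemma piInvNorm_neg {n : ℕ} (π x : Fin n → ℝ) :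
    piInvNorm π (fun i => -(x i)) = piInvNorm π x := by
  rw [piInvNorm, piInvNorm]; congr 1
  exact Finset.sum_congr rfl fun i _ => by rw [neg_pow]; ring_nf

lemma piInvNorm_add_le {n : ℕ} {π : Fin n → ℝ} (hπ : ∀ i, 0 < π i) (x y : Fin n → ℝ) :
    piInvNorm π (fun i => x i + y i) ≤ piInvNorm π x + piInvNorm π y := by
  rw [piInvNorm_eq_en hπ, piInvNorm_eq_en hπ, piInvNorm_eq_en hπ]
  have := en_add_le (fun i => x i / Real.sqrt (π i)) (fun i => y i / Real.sqrt (π i))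
  calc en (fun i => (x i + y i) / Real.sqrt (π i))
      = en (fun i => x i / Real.sqrt (π i) + y i / Real.sqrt (π i)) := by
        congr 1; funext i; rw [add_div]
    _ ≤ _ := this

lemma piInvNorm_eq_zero {n : ℕ} {π : Fin n → ℝ} (hπ : ∀ i, 0 < π i) {x : Fin n → ℝ}
    (h : piInvNorm π x = 0) : x = 0 := by
  rw [piInvNorm_eq_en hπ] at h
  have := en_eq_zero h
  funext i
  have hi := congrFun this i
  simp only [Pi.zero_apply] at hi ⊢
  have hs : Real.sqrt (π i) ≠ 0 := ne_of_gt (Real.sqrt_pos.mpr (hπ i))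
  exact (div_eq_zero_iff.mp hi).resolve_right hs

lemma piInvNorm_div {n : ℕ} {π : Fin n → ℝ} (hπ : ∀ i, 0 < π i) (x : Fin n → ℝ)
    {t : ℝ} (ht : 0 < t) : piInvNorm π (fun i => x i / t) = piInvNorm π x / t := by
  rw [piInvNorm_eq_en hπ, piInvNorm_eq_en hπ]
  have : (fun i => (x i / t) / Real.sqrt (π i)) = fun i => (x i / Real.sqrt (π i)) / t := by
    funext i; ring
  rw [this, en_div _ ht]

lemma piOp_bddAbove {n : ℕ} {π : Fin n → ℝ} (hπ : ∀ i, 0 < π i)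
    (A : Matrix (Fin n) (Fin n) ℝ) :
    BddAbove {r : ℝ | ∃ x : Fin n → ℝ, piInvNorm π x = 1 ∧
      r = piInvNorm π (Matrix.vecMul x A)} := by
  refine ⟨Real.sqrt (∑ j, (∑ i, π i * A i j ^ 2) / π j), ?_⟩
  rintro r ⟨x, hx, rfl⟩
  rw [piInvNorm]
  apply Real.sqrt_le_sqrt
  have hx2 : ∑ i, x i ^ 2 / π i = 1 := by
    have h1 : Real.sqrt (∑ i, x i ^ 2 / π i) = 1 := hx
    have h2 : (0:ℝ) ≤ ∑ i, x i ^ 2 / π i := by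
      refine Finset.sum_nonneg fun i _ => div_nonneg (sq_nonneg _) (hπ i).le
    nlinarith [Real.sq_sqrt h2]
  refine Finset.sum_le_sum fun j _ => ?_
  rw [vecMul_apply']
  rw [div_le_div_iff_of_pos_right (hπ j)]
  calc (∑ i, x i * A i j) ^ 2
      = (∑ i, (x i / Real.sqrt (π i)) * (Real.sqrt (π i) * A i j)) ^ 2 := by
        congr 1
        refine Finset.sum_congr rfl fun i _ => ?_
        have hs : Real.sqrt (π i) ≠ 0 := ne_of_gt (Real.sqrt_pos.mpr (hπ i))
        field_simp
    _ ≤ (∑ i, (x i / Real.sqrt (π i)) ^ 2) * (∑ i, (Real.sqrt (π i) * A i j) ^ 2) :=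
        Finset.sum_mul_sq_le_sq_mul_sq _ _ _
    _ = ∑ i, π i * A i j ^ 2 := by
        have e1 : ∑ i, (x i / Real.sqrt (π i)) ^ 2 = 1 := by
          rw [← hx2]
          refine Finset.sum_congr rfl fun i _ => ?_
          rw [div_pow, Real.sq_sqrt (hπ i).le]
        rw [e1, one_mul]
        refine Finset.sum_congr rfl fun i _ => ?_
        rw [mul_pow, Real.sq_sqrt (hπ i).le]

lemma piOp_mem_le {n : ℕ} {π : Fin n → ℝ} (hπ : ∀ i, 0 < π i)
    (A : Matrix (Fin n) (Fin n) ℝ) (x : Fin n → ℝ) (hx : piInvNorm π x = 1) :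
    piInvNorm π (Matrix.vecMul x A) ≤ piInvOpNorm π A :=
  le_csSup (piOp_bddAbove hπ A) ⟨x, hx, rfl⟩

lemma piOp_nonneg {n : ℕ} (hn : 0 < n) {π : Fin n → ℝ} (hπ : ∀ i, 0 < π i)
    (A : Matrix (Fin n) (Fin n) ℝ) : 0 ≤ piInvOpNorm π A := by
  set i0 : Fin n := ⟨0, hn⟩
  set x : Fin n → ℝ := fun i => if i = i0 then Real.sqrt (π i0) else 0 with hxdef
  have hx : piInvNorm π x = 1 := by
    rw [piInvNorm]
    have : ∑ i, x i ^ 2 / π i = 1 := by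
      rw [Finset.sum_eq_single i0]
      · simp [hxdef, Real.sq_sqrt (hπ i0).le, div_self (hπ i0).ne']
      · intro i _ hi; simp [hxdef, hi]
      · intro h; exact absurd (Finset.mem_univ i0) h
    rw [this, Real.sqrt_one]
  exact le_trans (piInvNorm_nonneg π _) (piOp_mem_le hπ A x hx)

lemma piOp_apply_le {n : ℕ} {π : Fin n → ℝ} (hπ : ∀ i, 0 < π i)
    (A : Matrix (Fin n) (Fin n) ℝ) (x : Fin n → ℝ) :
    piInvNorm π (Matrix.vecMul x A) ≤ piInvOpNorm π A * piInvNorm π x := by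
  by_cases hx : piInvNorm π x = 0
  · have hx0 : x = 0 := piInvNorm_eq_zero hπ hx
    subst hx0
    have : Matrix.vecMul (0 : Fin n → ℝ) A = 0 := Matrix.zero_vecMul A
    rw [this, hx, mul_zero]
  · have ht : 0 < piInvNorm π x := lt_of_le_of_ne (piInvNorm_nonneg π x) (Ne.symm hx)
    set t := piInvNorm π x with htdef
    have hx1 : piInvNorm π (fun i => x i / t) = 1 := by
      rw [piInvNorm_div hπ x ht, ← htdef, div_self ht.ne']
    have hmv : Matrix.vecMul (fun i => x i / t) A = fun j => (Matrix.vecMul x A) j / t := by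
      funext j
      rw [vecMul_apply', vecMul_apply', Finset.sum_div]
      exact Finset.sum_congr rfl fun i _ => by ring
    have := piOp_mem_le hπ A _ hx1
    rw [hmv, piInvNorm_div hπ _ ht] at this
    calc piInvNorm π (Matrix.vecMul x A) = (piInvNorm π (Matrix.vecMul x A) / t) * t := by
          field_simp
      _ ≤ piInvOpNorm π A * t := mul_le_mul_of_nonneg_right this ht.le

lemma tau_key {n : ℕ} (hn : 0 < n) {π : Fin n → ℝ} (hπ : ∀ i, 0 < π i)
    (S : Matrix (Fin n) (Fin n) ℝ) (v : Fin n → ℝ) :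
    piInvNorm π (Matrix.vecMul v (S - Matrix.of fun _ j => π j))
      ≤ spec2Norm (Matrix.of fun i j =>
          Real.sqrt (π i) * S i j / Real.sqrt (π j) - Real.sqrt (π i) * Real.sqrt (π j))
        * piInvNorm π v := by
  set M : Matrix (Fin n) (Fin n) ℝ := Matrix.of fun i j =>
    Real.sqrt (π i) * S i j / Real.sqrt (π j) - Real.sqrt (π i) * Real.sqrt (π j) with hMdef
  set y : Fin n → ℝ := fun i => v i / Real.sqrt (π i) with hydef
  have h1 : piInvNorm π v = en y := piInvNorm_eq_en hπ v
  have h2 : piInvNorm π (Matrix.vecMul v (S - Matrix.of fun _ j => π j))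
      = en (Matrix.vecMul y M) := by
    rw [piInvNorm_eq_en hπ, en, en]
    congr 1
    refine Finset.sum_congr rfl fun j _ => ?_
    congr 1
    rw [vecMul_apply', vecMul_apply', Finset.sum_div]
    refine Finset.sum_congr rfl fun i _ => ?_
    have hsi : Real.sqrt (π i) ≠ 0 := ne_of_gt (Real.sqrt_pos.mpr (hπ i))
    have hsj : Real.sqrt (π j) ≠ 0 := ne_of_gt (Real.sqrt_pos.mpr (hπ j))
    have hπj : Real.sqrt (π j) * Real.sqrt (π j) = π j := Real.mul_self_sqrt (hπ j).le
    simp only [Matrix.sub_apply, Matrix.of_apply, hMdef, hydef]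
    rw [← hπj]
    field_simp
    simp only [Real.sqrt_mul_self (Real.sqrt_nonneg _), Real.sqrt_sq (Real.sqrt_nonneg _)]
  rw [h1, h2]
  exact spec2_vecMul_le hn M y


/-- Eigenvector perturbation: if `π, π̂, π̃` are stationary distributions of row-stochastic
`S, Ŝ, S̃` with `π` entrywise positive and
`‖Π^{1/2} S Π^{-1/2} - √π√πᵀ‖₂ + ‖S - Ŝ‖_{π⁻¹} < 1`, then
`‖π̂ - π̃‖_{π⁻¹} ≤ ‖π̃ᵀ(S̃ - Ŝ)‖_{π⁻¹} / (1 - ‖Π^{1/2} S Π^{-1/2} - √π√πᵀ‖₂ - ‖S - Ŝ‖_{π⁻¹})`. -/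
theorem eigenvector_perturbation (n : ℕ)
    (S Shat Stil : Matrix (Fin n) (Fin n) ℝ)
    (hSnn : ∀ i j, 0 ≤ S i j) (hSrow : ∀ i, ∑ j, S i j = 1)
    (hShatnn : ∀ i j, 0 ≤ Shat i j) (hShatrow : ∀ i, ∑ j, Shat i j = 1)
    (hStilnn : ∀ i j, 0 ≤ Stil i j) (hStilrow : ∀ i, ∑ j, Stil i j = 1)
    (π πhat πtil : Fin n → ℝ)
    (hπpos : ∀ i, 0 < π i) (hπsum : ∑ i, π i = 1)
    (hπstat : ∀ j, ∑ i, π i * S i j = π j)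
    (hπhatnn : ∀ i, 0 ≤ πhat i) (hπhatsum : ∑ i, πhat i = 1)
    (hπhatstat : ∀ j, ∑ i, πhat i * Shat i j = πhat j)
    (hπtilnn : ∀ i, 0 ≤ πtil i) (hπtilsum : ∑ i, πtil i = 1)
    (hπtilstat : ∀ j, ∑ i, πtil i * Stil i j = πtil j)
    (hcond : spec2Norm (Matrix.of fun i j =>
        Real.sqrt (π i) * S i j / Real.sqrt (π j) - Real.sqrt (π i) * Real.sqrt (π j))
      + piInvOpNorm π (S - Shat) < 1) :
    piInvNorm π (fun i => πhat i - πtil i)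
      ≤ piInvNorm π (Matrix.vecMul πtil (Stil - Shat))
        / (1 - spec2Norm (Matrix.of fun i j =>
            Real.sqrt (π i) * S i j / Real.sqrt (π j) - Real.sqrt (π i) * Real.sqrt (π j))
          - piInvOpNorm π (S - Shat)) := by
  have hn : 0 < n := by
    rcases Nat.eq_zero_or_pos n with h | h
    · subst h; simp at hπsum
    · exact h
  set τ := spec2Norm (Matrix.of fun i j =>
      Real.sqrt (π i) * S i j / Real.sqrt (π j) - Real.sqrt (π i) * Real.sqrt (π j)) with hτdef
  set ρ := piInvOpNorm π (S - Shat) with hρdef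
  set P : Matrix (Fin n) (Fin n) ℝ := Matrix.of fun _ j => π j with hPdef
  set v : Fin n → ℝ := fun i => πhat i - πtil i with hvdef
  have hvsum : ∑ i, v i = 0 := by
    simp only [hvdef]
    rw [Finset.sum_sub_distrib, hπhatsum, hπtilsum]
    ring
  have hdec : ∀ j, v j = (Matrix.vecMul v (S - P)) j
      + (-(Matrix.vecMul v (S - Shat) j)) + (-(Matrix.vecMul πtil (Stil - Shat) j)) := by
    intro j
    have hA := hπhatstat j
    have hB := hπtilstat j
    simp only [vecMul_apply', Matrix.sub_apply, Matrix.of_apply, hvdef, hPdef]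
    have e1 : ∑ i, (πhat i - πtil i) * (S i j - π j)
        = (∑ i, (πhat i - πtil i) * S i j) - (∑ i, (πhat i - πtil i)) * π j := by
      rw [Finset.sum_mul, ← Finset.sum_sub_distrib]
      exact Finset.sum_congr rfl fun i _ => by ring
    have e2 : ∑ i, (πhat i - πtil i) * (S i j - Shat i j)
        = (∑ i, (πhat i - πtil i) * S i j) - (∑ i, (πhat i - πtil i) * Shat i j) := by
      rw [← Finset.sum_sub_distrib]
      exact Finset.sum_congr rfl fun i _ => by ring
    have e3 : ∑ i, πtil i * (Stil i j - Shat i j)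
        = (∑ i, πtil i * Stil i j) - ∑ i, πtil i * Shat i j := by
      rw [← Finset.sum_sub_distrib]
      exact Finset.sum_congr rfl fun i _ => by ring
    have e4 : ∑ i, (πhat i - πtil i) * Shat i j
        = (∑ i, πhat i * Shat i j) - ∑ i, πtil i * Shat i j := by
      rw [← Finset.sum_sub_distrib]
      exact Finset.sum_congr rfl fun i _ => by ring
    have hv0 : ∑ i, (πhat i - πtil i) = 0 := by
      rw [Finset.sum_sub_distrib, hπhatsum, hπtilsum]; ring
    rw [e1, e2, e3, e4, hv0, hA, hB]
    ring
  have htri : piInvNorm π v ≤ piInvNorm π (Matrix.vecMul v (S - P))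
      + piInvNorm π (Matrix.vecMul v (S - Shat))
      + piInvNorm π (Matrix.vecMul πtil (Stil - Shat)) := by
    have h0 : piInvNorm π v = piInvNorm π (fun j =>
        ((Matrix.vecMul v (S - P)) j + (-(Matrix.vecMul v (S - Shat) j)))
          + (-(Matrix.vecMul πtil (Stil - Shat) j))) := by
      congr 1
      funext j
      rw [hdec j]
    rw [h0]
    calc piInvNorm π (fun j =>
        ((Matrix.vecMul v (S - P)) j + (-(Matrix.vecMul v (S - Shat) j)))
          + (-(Matrix.vecMul πtil (Stil - Shat) j)))
        ≤ piInvNorm π (fun j =>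
            (Matrix.vecMul v (S - P)) j + (-(Matrix.vecMul v (S - Shat) j)))
          + piInvNorm π (fun j => -(Matrix.vecMul πtil (Stil - Shat) j)) :=
          piInvNorm_add_le hπpos _ _
      _ ≤ (piInvNorm π (Matrix.vecMul v (S - P))
            + piInvNorm π (fun j => -(Matrix.vecMul v (S - Shat) j)))
          + piInvNorm π (fun j => -(Matrix.vecMul πtil (Stil - Shat) j)) := by
          gcongr
          exact piInvNorm_add_le hπpos _ _
      _ = piInvNorm π (Matrix.vecMul v (S - P))
          + piInvNorm π (Matrix.vecMul v (S - Shat))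
          + piInvNorm π (Matrix.vecMul πtil (Stil - Shat)) := by
          rw [piInvNorm_neg, piInvNorm_neg]
  have hτb : piInvNorm π (Matrix.vecMul v (S - P)) ≤ τ * piInvNorm π v :=
    tau_key hn hπpos S v
  have hρb : piInvNorm π (Matrix.vecMul v (S - Shat)) ≤ ρ * piInvNorm π v :=
    piOp_apply_le hπpos _ v
  have hpos : 0 < 1 - τ - ρ := by linarith
  rw [le_div_iff₀ hpos]
  nlinarith [htri, hτb, hρb, piInvNorm_nonneg π v]
end

section
/- Let $R \in \mathbb{R}^{n\times n}$ be a nonnegative matrix with Perron-Frobenius eigenvalue $1$ and common positive left and right eigenvector $\sqrt{\pi}$ (so $R$ satifies detailed balance under symmetrization), with $R_{ii} \ge 1/2$ for all $i$. If the edge expansion satisfies $\phi(R) \ge \xi > 0$ and Cheeger's inequality $1 - \lambda_2(M) \ge \phi(M)^2/2$ holds for the symmetric matrix $M = (R+R^T)/2$, then the second largest singular value of $R$ satisfies $\sigma_2(R) \le 1 - \frac{1}{4}\xi^2$, i.e., $\|R - \sqrt{\pi}\sqrt{\pi}^T\|_2 \le 1 - \frac{1}{4}\xi^2$. -/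
open Finset Matrix

private lemma auxCS (n : ℕ) (a : Fin n → Fin n → ℝ) (p : Fin n → ℝ)
    (hp : ∀ i, 0 < p i) (hann : ∀ i j, 0 ≤ a i j)
    (harow : ∀ i, ∑ j, a i j * p j = 2⁻¹ * p i)
    (hacol : ∀ j, ∑ i, p i * a i j = 2⁻¹ * p j)
    (y : Fin n → ℝ) :
    ∑ i, (∑ j, a i j * y j) ^ 2 ≤ 4⁻¹ * ∑ j, (y j) ^ 2 := by
  have key : ∀ i, (∑ j, a i j * y j) ^ 2 ≤ (2⁻¹ * p i) * ∑ j, a i j * (y j) ^ 2 / p j := by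
    intro i
    have hCS := Finset.sum_mul_sq_le_sq_mul_sq Finset.univ
      (fun j => Real.sqrt (a i j * p j)) (fun j => Real.sqrt (a i j / p j) * y j)
    have e1 : ∀ j, Real.sqrt (a i j * p j) * (Real.sqrt (a i j / p j) * y j)
        = a i j * y j := by
      intro j
      rw [← mul_assoc, ← Real.sqrt_mul (mul_nonneg (hann i j) (hp j).le)]
      have h : a i j * p j * (a i j / p j) = (a i j) ^ 2 := by
        field_simp [(hp j).ne']
      rw [h, Real.sqrt_sq (hann i j)]
    have e2 : ∀ j, (Real.sqrt (a i j * p j)) ^ 2 = a i j * p j :=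
      fun j => Real.sq_sqrt (mul_nonneg (hann i j) (hp j).le)
    have e3 : ∀ j, (Real.sqrt (a i j / p j) * y j) ^ 2 = a i j * (y j) ^ 2 / p j := by
      intro j
      rw [mul_pow, Real.sq_sqrt (div_nonneg (hann i j) (hp j).le)]
      ring
    simp only [e1, e2, e3] at hCS
    rwa [harow i] at hCS
  calc ∑ i, (∑ j, a i j * y j) ^ 2
      ≤ ∑ i, (2⁻¹ * p i) * ∑ j, a i j * (y j) ^ 2 / p j :=
        Finset.sum_le_sum fun i _ => key i
    _ = ∑ i, ∑ j, 2⁻¹ * ((y j) ^ 2 / p j) * (p i * a i j) :=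
        Finset.sum_congr rfl fun i _ => by
          rw [Finset.mul_sum]
          exact Finset.sum_congr rfl fun j _ => by ring
    _ = ∑ j, 2⁻¹ * ((y j) ^ 2 / p j) * ∑ i, (p i * a i j) := by
        rw [Finset.sum_comm]
        exact Finset.sum_congr rfl fun j _ => (Finset.mul_sum _ _ _).symm
    _ = ∑ j, 4⁻¹ * (y j) ^ 2 := Finset.sum_congr rfl fun j _ => by
        rw [hacol j]
        field_simp [(hp j).ne']
        ring
    _ = 4⁻¹ * ∑ j, (y j) ^ 2 := (Finset.mul_sum _ _ _).symm

/-- The edge expansion of a nonnegative matrix `M` with common positive left/right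
Perron eigenvector `√π` (so `uᵢvᵢ = πᵢ`). -/
noncomputable def edgeExpansion {n : ℕ} (π : Fin n → ℝ)
    (M : Matrix (Fin n) (Fin n) ℝ) : ℝ :=
  sInf {r : ℝ | ∃ s : Finset (Fin n), s.Nonempty ∧ s ≠ Finset.univ ∧
    r = (∑ i ∈ s, ∑ j ∈ sᶜ, M i j * Real.sqrt (π i) * Real.sqrt (π j))
          / min (∑ i ∈ s, π i) (∑ i ∈ sᶜ, π i)}

/-- The second-largest eigenvalue of a symmetric matrix with top eigenvector `√π`,
via the variational (Courant–Fischer) characterization. -/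
noncomputable def lambdaTwo {n : ℕ} (π : Fin n → ℝ)
    (M : Matrix (Fin n) (Fin n) ℝ) : ℝ :=
  sSup {r : ℝ | ∃ x : Fin n → ℝ, (∑ i, (x i) ^ 2) = 1 ∧
    (∑ i, x i * Real.sqrt (π i)) = 0 ∧ r = x ⬝ᵥ (M *ᵥ x)}

set_option maxHeartbeats 2000000 in
/-- Spectral norm bound via expansion: for a nonnegative `½`-lazy matrix `R` with
Perron eigenvalue `1` and common positive left/right eigenvector `√π`, if
`φ(R) ≥ ξ > 0` and Cheeger's inequality holds for `M = (R + Rᵀ)/2`, then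
`σ₂(R) = ‖R - √π√πᵀ‖₂ ≤ 1 - ξ²/4`. -/
theorem spectral_norm_bound_general_graph (n : ℕ)
    (π : Fin n → ℝ) (hπpos : ∀ i, 0 < π i) (hπsum : ∑ i, π i = 1)
    (R : Matrix (Fin n) (Fin n) ℝ)
    (hRnn : ∀ i j, 0 ≤ R i j)
    (hRright : R *ᵥ (fun i => Real.sqrt (π i)) = fun i => Real.sqrt (π i))
    (hRleft : Matrix.vecMul (fun i => Real.sqrt (π i)) R = fun i => Real.sqrt (π i))
    (hLazy : ∀ i, (1 : ℝ) / 2 ≤ R i i)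
    (ξ : ℝ) (hξ : 0 < ξ)
    (hexp : ξ ≤ edgeExpansion π R)
    (hCheeger : (edgeExpansion π ((2⁻¹ : ℝ) • (R + Rᵀ))) ^ 2 / 2
      ≤ 1 - lambdaTwo π ((2⁻¹ : ℝ) • (R + Rᵀ))) :
    spec2Norm (Matrix.of fun i j => R i j - Real.sqrt (π i) * Real.sqrt (π j))
      ≤ 1 - ξ ^ 2 / 4 := by
  have hsqpos : ∀ i, 0 < Real.sqrt (π i) := fun i => Real.sqrt_pos.2 (hπpos i)
  have hsqsq : ∀ i, Real.sqrt (π i) * Real.sqrt (π i) = π i :=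
    fun i => Real.mul_self_sqrt (hπpos i).le
  have hrow : ∀ i, ∑ j, R i j * Real.sqrt (π j) = Real.sqrt (π i) := by
    intro i
    have := congrFun hRright i
    simpa [Matrix.mulVec, dotProduct] using this
  have hcol : ∀ j, ∑ i, Real.sqrt (π i) * R i j = Real.sqrt (π j) := by
    intro j
    have := congrFun hRleft j
    simpa [Matrix.vecMul, dotProduct] using this
  -- cut identities
  have hc1 : ∀ s : Finset (Fin n),
      ∑ i ∈ s, ∑ j ∈ sᶜ, R i j * Real.sqrt (π i) * Real.sqrt (π j)
      = ∑ i ∈ s, π i - ∑ i ∈ s, ∑ j ∈ s, R i j * Real.sqrt (π i) * Real.sqrt (π j) := by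
    intro s
    have h : ∀ i, ∑ j ∈ sᶜ, R i j * Real.sqrt (π i) * Real.sqrt (π j)
        = π i - ∑ j ∈ s, R i j * Real.sqrt (π i) * Real.sqrt (π j) := by
      intro i
      have h1 := Finset.sum_add_sum_compl s (fun j => R i j * Real.sqrt (π i) * Real.sqrt (π j))
      have h2 : ∑ j, R i j * Real.sqrt (π i) * Real.sqrt (π j) = π i := by
        calc ∑ j, R i j * Real.sqrt (π i) * Real.sqrt (π j)
            = Real.sqrt (π i) * ∑ j, R i j * Real.sqrt (π j) := by
              rw [Finset.mul_sum]; exact Finset.sum_congr rfl fun j _ => by ring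
          _ = π i := by rw [hrow i, hsqsq i]
      linarith
    rw [Finset.sum_congr rfl fun i _ => h i, Finset.sum_sub_distrib]
  have hc2 : ∀ s : Finset (Fin n),
      ∑ i ∈ s, ∑ j ∈ sᶜ, R j i * Real.sqrt (π i) * Real.sqrt (π j)
      = ∑ i ∈ s, π i - ∑ i ∈ s, ∑ j ∈ s, R j i * Real.sqrt (π i) * Real.sqrt (π j) := by
    intro s
    have h : ∀ i, ∑ j ∈ sᶜ, R j i * Real.sqrt (π i) * Real.sqrt (π j)
        = π i - ∑ j ∈ s, R j i * Real.sqrt (π i) * Real.sqrt (π j) := by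
      intro i
      have h1 := Finset.sum_add_sum_compl s (fun j => R j i * Real.sqrt (π i) * Real.sqrt (π j))
      have h2 : ∑ j, R j i * Real.sqrt (π i) * Real.sqrt (π j) = π i := by
        calc ∑ j, R j i * Real.sqrt (π i) * Real.sqrt (π j)
            = Real.sqrt (π i) * ∑ j, Real.sqrt (π j) * R j i := by
              rw [Finset.mul_sum]; exact Finset.sum_congr rfl fun j _ => by ring
          _ = π i := by rw [hcol i, hsqsq i]
      linarith
    rw [Finset.sum_congr rfl fun i _ => h i, Finset.sum_sub_distrib]
  have hswap : ∀ s : Finset (Fin n),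
      ∑ i ∈ s, ∑ j ∈ s, R j i * Real.sqrt (π i) * Real.sqrt (π j)
      = ∑ i ∈ s, ∑ j ∈ s, R i j * Real.sqrt (π i) * Real.sqrt (π j) := by
    intro s
    rw [Finset.sum_comm]
    exact Finset.sum_congr rfl fun i _ => Finset.sum_congr rfl fun j _ => by ring
  have hcT : ∀ s : Finset (Fin n),
      ∑ i ∈ s, ∑ j ∈ sᶜ, R j i * Real.sqrt (π i) * Real.sqrt (π j)
      = ∑ i ∈ s, ∑ j ∈ sᶜ, R i j * Real.sqrt (π i) * Real.sqrt (π j) := by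
    intro s
    rw [hc1, hc2, hswap]
  have hcc : ∀ s : Finset (Fin n),
      ∑ i ∈ s, ∑ j ∈ sᶜ, R i j * Real.sqrt (π i) * Real.sqrt (π j)
      = ∑ i ∈ sᶜ, ∑ j ∈ sᶜᶜ, R i j * Real.sqrt (π i) * Real.sqrt (π j) := by
    intro s
    calc ∑ i ∈ s, ∑ j ∈ sᶜ, R i j * Real.sqrt (π i) * Real.sqrt (π j)
        = ∑ i ∈ sᶜ, ∑ j ∈ s, R j i * Real.sqrt (π i) * Real.sqrt (π j) :=
          Finset.sum_comm.trans
            (Finset.sum_congr rfl fun i _ => Finset.sum_congr rfl fun j _ => by ring)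
      _ = ∑ i ∈ sᶜ, ∑ j ∈ sᶜᶜ, R j i * Real.sqrt (π i) * Real.sqrt (π j) := by rw [compl_compl]
      _ = ∑ i ∈ sᶜ, ∑ j ∈ sᶜᶜ, R i j * Real.sqrt (π i) * Real.sqrt (π j) := hcT sᶜ
  -- the lazy part a = R - I/2
  set a : Fin n → Fin n → ℝ := fun i j => R i j - if i = j then 2⁻¹ else 0 with ha
  have hann : ∀ i j, 0 ≤ a i j := by
    intro i j
    by_cases h : i = j
    · subst h
      simp only [ha, if_pos rfl]
      have := hLazy i
      norm_num at this ⊢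
      linarith
    · simp only [ha, if_neg h, sub_zero]
      exact hRnn i j
  have hite : ∀ (i : Fin n) (v : Fin n → ℝ),
      ∑ j, (if i = j then (2⁻¹ : ℝ) else 0) * v j = 2⁻¹ * v i := by
    intro i v
    rw [Finset.sum_eq_single i]
    · simp
    · intro b _ hb
      simp [Ne.symm hb]
    · simp
  have hite' : ∀ (j : Fin n) (v : Fin n → ℝ),
      ∑ i, v i * (if i = j then (2⁻¹ : ℝ) else 0) = 2⁻¹ * v j := by
    intro j v
    rw [Finset.sum_eq_single j]
    · simp [mul_comm]
    · intro b _ hb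
      simp [hb]
    · simp
  have harow : ∀ i, ∑ j, a i j * Real.sqrt (π j) = 2⁻¹ * Real.sqrt (π i) := by
    intro i
    have : ∑ j, a i j * Real.sqrt (π j)
        = (∑ j, R i j * Real.sqrt (π j)) - ∑ j, (if i = j then (2⁻¹:ℝ) else 0) * Real.sqrt (π j) := by
      rw [← Finset.sum_sub_distrib]
      exact Finset.sum_congr rfl fun j _ => by simp only [ha]; ring
    rw [this, hrow i, hite i]
    ring
  have hacol : ∀ j, ∑ i, Real.sqrt (π i) * a i j = 2⁻¹ * Real.sqrt (π j) := by
    intro j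
    have : ∑ i, Real.sqrt (π i) * a i j
        = (∑ i, Real.sqrt (π i) * R i j) - ∑ i, Real.sqrt (π i) * (if i = j then (2⁻¹:ℝ) else 0) := by
      rw [← Finset.sum_sub_distrib]
      exact Finset.sum_congr rfl fun i _ => by simp only [ha]; ring
    rw [this, hcol j, hite' j]
    ring
  have hCSR : ∀ y : Fin n → ℝ, ∑ i, (∑ j, a i j * y j) ^ 2 ≤ 4⁻¹ * ∑ j, (y j) ^ 2 :=
    fun y => auxCS n a (fun i => Real.sqrt (π i)) hsqpos hann harow hacol y
  -- quadratic form comparison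
  have hquad : ∀ y : Fin n → ℝ,
      ∑ i, (∑ j, R i j * y j) ^ 2 ≤ y ⬝ᵥ (((2⁻¹ : ℝ) • (R + Rᵀ)) *ᵥ y) := by
    intro y
    have hsplit : ∀ i, ∑ j, R i j * y j = 2⁻¹ * y i + ∑ j, a i j * y j := by
      intro i
      have : ∑ j, a i j * y j
          = (∑ j, R i j * y j) - ∑ j, (if i = j then (2⁻¹:ℝ) else 0) * y j := by
        rw [← Finset.sum_sub_distrib]
        exact Finset.sum_congr rfl fun j _ => by simp only [ha]; ring
      rw [this, hite i]
      ring
    have hRHS : y ⬝ᵥ (((2⁻¹ : ℝ) • (R + Rᵀ)) *ᵥ y)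
        = ∑ i, y i * ∑ j, R i j * y j := by
      have e1 : y ⬝ᵥ (((2⁻¹ : ℝ) • (R + Rᵀ)) *ᵥ y)
          = ∑ i, ∑ j, (2⁻¹ * (y i * (R i j * y j)) + 2⁻¹ * (y i * (R j i * y j))) := by
        simp only [dotProduct, Matrix.mulVec, Matrix.smul_apply, Matrix.add_apply,
          Matrix.transpose_apply, smul_eq_mul, Finset.mul_sum]
        exact Finset.sum_congr rfl fun i _ => Finset.sum_congr rfl fun j _ => by ring
      have e2 : ∑ i, ∑ j, (y i * (R j i * y j)) = ∑ i, ∑ j, (y i * (R i j * y j)) :=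
        Finset.sum_comm.trans
          (Finset.sum_congr rfl fun i _ => Finset.sum_congr rfl fun j _ => by ring)
      rw [e1]
      simp only [Finset.sum_add_distrib, ← Finset.mul_sum]
      have e2' : ∑ i, y i * ∑ j, R j i * y j = ∑ i, y i * ∑ j, R i j * y j := by
        simp only [Finset.mul_sum]
        exact e2
      rw [e2']
      ring
    rw [hRHS]
    have expand : ∀ i, (∑ j, R i j * y j) ^ 2
        = 4⁻¹ * (y i) ^ 2 + y i * (∑ j, a i j * y j) + (∑ j, a i j * y j) ^ 2 := by
      intro i
      rw [hsplit i]
      ring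
    have expand2 : ∀ i, y i * (∑ j, R i j * y j)
        = 2⁻¹ * (y i) ^ 2 + y i * (∑ j, a i j * y j) := by
      intro i
      rw [hsplit i]
      ring
    rw [Finset.sum_congr rfl fun i _ => expand i,
        Finset.sum_congr rfl fun i _ => expand2 i]
    simp only [Finset.sum_add_distrib, ← Finset.mul_sum]
    have := hCSR y
    linarith
  -- numerator equality for the symmetrization
  have hnum : ∀ s : Finset (Fin n),
      ∑ i ∈ s, ∑ j ∈ sᶜ, ((2⁻¹ : ℝ) • (R + Rᵀ)) i j * Real.sqrt (π i) * Real.sqrt (π j)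
      = ∑ i ∈ s, ∑ j ∈ sᶜ, R i j * Real.sqrt (π i) * Real.sqrt (π j) := by
    intro s
    have e : ∀ i j, ((2⁻¹ : ℝ) • (R + Rᵀ)) i j * Real.sqrt (π i) * Real.sqrt (π j)
        = 2⁻¹ * (R i j * Real.sqrt (π i) * Real.sqrt (π j))
          + 2⁻¹ * (R j i * Real.sqrt (π i) * Real.sqrt (π j)) := by
      intro i j
      simp only [Matrix.smul_apply, Matrix.add_apply, Matrix.transpose_apply, smul_eq_mul]
      ring
    simp only [e, Finset.sum_add_distrib, ← Finset.mul_sum]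
    rw [hcT s]
    ring
  have hφeq : edgeExpansion π ((2⁻¹ : ℝ) • (R + Rᵀ)) = edgeExpansion π R := by
    unfold edgeExpansion
    congr 1
    ext r
    constructor
    · rintro ⟨s, h1, h2, h3⟩
      exact ⟨s, h1, h2, by rw [h3, hnum s]⟩
    · rintro ⟨s, h1, h2, h3⟩
      exact ⟨s, h1, h2, by rw [h3, hnum s]⟩
  simp only [edgeExpansion] at hexp
  -- degenerate case: no nonempty proper subset
  by_cases hex : ∃ s : Finset (Fin n), s.Nonempty ∧ s ≠ Finset.univ
  swap
  · exfalso
    have hempty : {r : ℝ | ∃ s : Finset (Fin n), s.Nonempty ∧ s ≠ Finset.univ ∧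
        r = (∑ i ∈ s, ∑ j ∈ sᶜ, R i j * Real.sqrt (π i) * Real.sqrt (π j))
          / min (∑ i ∈ s, π i) (∑ i ∈ sᶜ, π i)} = ∅ := by
      ext r
      simp only [Set.mem_setOf_eq, Set.mem_empty_iff_false, iff_false, not_exists]
      rintro s ⟨h1, h2, -⟩
      exact hex ⟨s, h1, h2⟩
    rw [hempty, Real.sInf_empty] at hexp
    linarith
  obtain ⟨s₀, hs₀1, hs₀2⟩ := hex
  have hcutnn : ∀ s t : Finset (Fin n),
      0 ≤ ∑ i ∈ s, ∑ j ∈ t, R i j * Real.sqrt (π i) * Real.sqrt (π j) :=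
    fun s t => Finset.sum_nonneg fun i _ => Finset.sum_nonneg fun j _ =>
      mul_nonneg (mul_nonneg (hRnn i j) (Real.sqrt_nonneg _)) (Real.sqrt_nonneg _)
  have hbddb : BddBelow {r : ℝ | ∃ s : Finset (Fin n), s.Nonempty ∧ s ≠ Finset.univ ∧
      r = (∑ i ∈ s, ∑ j ∈ sᶜ, R i j * Real.sqrt (π i) * Real.sqrt (π j))
        / min (∑ i ∈ s, π i) (∑ i ∈ sᶜ, π i)} := by
    refine ⟨0, ?_⟩
    rintro r ⟨s, -, -, rfl⟩
    exact div_nonneg (hcutnn _ _)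
      (le_min (Finset.sum_nonneg fun i _ => (hπpos i).le)
        (Finset.sum_nonneg fun i _ => (hπpos i).le))
  have hmin0 : 0 < min (∑ i ∈ s₀, π i) (∑ i ∈ s₀ᶜ, π i) :=
    lt_min (Finset.sum_pos (fun i _ => hπpos i) hs₀1)
      (Finset.sum_pos (fun i _ => hπpos i) (Finset.nonempty_iff_ne_empty.2 fun h => hs₀2 ((Finset.compl_eq_empty_iff s₀).1 h)))
  have hcutle : ∑ i ∈ s₀, ∑ j ∈ s₀ᶜ, R i j * Real.sqrt (π i) * Real.sqrt (π j)
      ≤ min (∑ i ∈ s₀, π i) (∑ i ∈ s₀ᶜ, π i) := by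
    refine le_min ?_ ?_
    · rw [hc1 s₀]
      linarith [hcutnn s₀ s₀]
    · rw [hcc s₀, hc1 s₀ᶜ]
      linarith [hcutnn s₀ᶜ s₀ᶜ]
  have hξ1 : ξ ≤ 1 := by
    refine le_trans hexp (le_trans (csInf_le hbddb ⟨s₀, hs₀1, hs₀2, rfl⟩) ?_)
    exact (div_le_one hmin0).2 hcutle
  -- bound on lambdaTwo
  have hbddA : BddAbove {r : ℝ | ∃ x : Fin n → ℝ, (∑ i, (x i) ^ 2) = 1 ∧
      (∑ i, x i * Real.sqrt (π i)) = 0 ∧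
      r = x ⬝ᵥ (((2⁻¹ : ℝ) • (R + Rᵀ)) *ᵥ x)} := by
    refine ⟨∑ i, ∑ j, |((2⁻¹ : ℝ) • (R + Rᵀ)) i j|, ?_⟩
    rintro r ⟨x, hx1, -, rfl⟩
    have hxb : ∀ i, |x i| ≤ 1 := by
      intro i
      have h2 : (x i) ^ 2 ≤ 1 := by
        rw [← hx1]
        exact Finset.single_le_sum (fun j _ => sq_nonneg (x j)) (Finset.mem_univ i)
      nlinarith [abs_nonneg (x i), sq_abs (x i)]
    calc x ⬝ᵥ (((2⁻¹ : ℝ) • (R + Rᵀ)) *ᵥ x)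
        = ∑ i, ∑ j, x i * (((2⁻¹ : ℝ) • (R + Rᵀ)) i j * x j) := by
          simp only [dotProduct, Matrix.mulVec, Finset.mul_sum]
      _ ≤ ∑ i, ∑ j, |((2⁻¹ : ℝ) • (R + Rᵀ)) i j| :=
          Finset.sum_le_sum fun i _ => Finset.sum_le_sum fun j _ => by
            set m := ((2⁻¹ : ℝ) • (R + Rᵀ)) i j
            calc x i * (m * x j) ≤ |x i * (m * x j)| := le_abs_self _
              _ = |x i| * |m| * |x j| := by rw [abs_mul, abs_mul]; ring
              _ ≤ 1 * |m| * 1 :=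
                  mul_le_mul (mul_le_mul_of_nonneg_right (hxb i) (abs_nonneg m)) (hxb j)
                    (abs_nonneg (x j)) (mul_nonneg zero_le_one (abs_nonneg m))
              _ = |m| := by ring
  have hlamtwo : lambdaTwo π ((2⁻¹ : ℝ) • (R + Rᵀ)) ≤ 1 - ξ ^ 2 / 2 := by
    have hφM : ξ ≤ edgeExpansion π ((2⁻¹ : ℝ) • (R + Rᵀ)) := by
      rw [hφeq]
      exact le_trans hexp le_rfl
    nlinarith [hCheeger, hφM, hξ, mul_le_mul_of_nonneg_left hφM hξ.le]
  -- final bound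
  unfold spec2Norm
  apply Real.sSup_le
  · rintro r ⟨x, hx1, rfl⟩
    set c : ℝ := ∑ j, x j * Real.sqrt (π j) with hcdef
    set y : Fin n → ℝ := fun j => x j - c * Real.sqrt (π j) with hydef
    have e1 : ∑ i, (Real.sqrt (π i) * Real.sqrt (π i)) = 1 := by
      rw [Finset.sum_congr rfl fun i _ => hsqsq i, hπsum]
    have hBx : ∀ i, ((Matrix.of fun i j => R i j - Real.sqrt (π i) * Real.sqrt (π j)) *ᵥ x) i
        = ∑ j, R i j * y j := by
      intro i
      have l1 : ((Matrix.of fun i j => R i j - Real.sqrt (π i) * Real.sqrt (π j)) *ᵥ x) i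
          = (∑ j, R i j * x j) - Real.sqrt (π i) * c := by
        simp only [Matrix.mulVec, dotProduct, Matrix.of_apply]
        calc ∑ j, (R i j - Real.sqrt (π i) * Real.sqrt (π j)) * x j
            = ∑ j, (R i j * x j - Real.sqrt (π i) * (x j * Real.sqrt (π j))) :=
              Finset.sum_congr rfl fun j _ => by ring
          _ = (∑ j, R i j * x j) - Real.sqrt (π i) * ∑ j, x j * Real.sqrt (π j) := by
              rw [Finset.sum_sub_distrib, Finset.mul_sum]
          _ = (∑ j, R i j * x j) - Real.sqrt (π i) * c := by rw [← hcdef]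
      have l2 : ∑ j, R i j * y j = (∑ j, R i j * x j) - Real.sqrt (π i) * c := by
        calc ∑ j, R i j * y j
            = ∑ j, (R i j * x j - c * (R i j * Real.sqrt (π j))) :=
              Finset.sum_congr rfl fun j _ => by rw [hydef]; ring
          _ = (∑ j, R i j * x j) - c * ∑ j, R i j * Real.sqrt (π j) := by
              rw [Finset.sum_sub_distrib, Finset.mul_sum]
          _ = (∑ j, R i j * x j) - Real.sqrt (π i) * c := by rw [hrow i]; ring
      rw [l1, l2]
    have hynorm : ∑ i, (y i) ^ 2 = 1 - c ^ 2 := by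
      have hterm : ∀ i, (y i) ^ 2
          = (x i) ^ 2 - 2 * c * (x i * Real.sqrt (π i))
            + c ^ 2 * (Real.sqrt (π i) * Real.sqrt (π i)) := by
        intro i
        rw [hydef]
        ring
      rw [Finset.sum_congr rfl fun i _ => hterm i]
      simp only [Finset.sum_add_distrib, Finset.sum_sub_distrib, ← Finset.mul_sum]
      rw [hx1, e1, ← hcdef]
      ring
    have hyle : ∑ i, (y i) ^ 2 ≤ 1 := by
      rw [hynorm]
      nlinarith [sq_nonneg c]
    have hortho : ∑ i, y i * Real.sqrt (π i) = 0 := by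
      have hterm : ∀ i, y i * Real.sqrt (π i)
          = x i * Real.sqrt (π i) - c * (Real.sqrt (π i) * Real.sqrt (π i)) := by
        intro i
        rw [hydef]
        ring
      rw [Finset.sum_congr rfl fun i _ => hterm i, Finset.sum_sub_distrib, ← Finset.mul_sum,
        e1, ← hcdef]
      ring
    have hT : ∑ i, (∑ j, R i j * y j) ^ 2 ≤ 1 - ξ ^ 2 / 2 := by
      rcases eq_or_lt_of_le
          (Finset.sum_nonneg fun i (_ : i ∈ Finset.univ) => sq_nonneg (y i)) with h0 | hpos
      · have hy0 : ∀ i, y i = 0 := by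
          intro i
          have h := (Finset.sum_eq_zero_iff_of_nonneg
            (fun i (_ : i ∈ Finset.univ) => sq_nonneg (y i))).1 h0.symm i (Finset.mem_univ i)
          exact (pow_eq_zero_iff (two_ne_zero)).1 h
        have hz : ∀ i, (∑ j, R i j * y j) = 0 :=
          fun i => Finset.sum_eq_zero fun j _ => by rw [hy0 j, mul_zero]
        rw [Finset.sum_congr rfl fun i _ => by rw [hz i]]
        simp only [ne_eq, OfNat.ofNat_ne_zero, not_false_eq_true, zero_pow, Finset.sum_const,
          smul_zero]
        nlinarith
      · set t : ℝ := ∑ i, (y i) ^ 2 with htdef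
        have hst : 0 < Real.sqrt t := Real.sqrt_pos.2 hpos
        have hts : Real.sqrt t * Real.sqrt t = t := Real.mul_self_sqrt hpos.le
        set z : Fin n → ℝ := fun i => y i / Real.sqrt t with hzdef
        have hyz : ∀ i, y i = Real.sqrt t * z i := by
          intro i
          rw [hzdef]
          field_simp
        have hz1 : ∑ i, (z i) ^ 2 = 1 := by
          simp only [hzdef, div_pow]
          rw [← Finset.sum_div, Real.sq_sqrt hpos.le, ← htdef, div_self hpos.ne']
        have hz2 : ∑ i, z i * Real.sqrt (π i) = 0 := by
          simp only [hzdef, div_mul_eq_mul_div]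
          rw [← Finset.sum_div, hortho, zero_div]
        have hscale : y ⬝ᵥ (((2⁻¹ : ℝ) • (R + Rᵀ)) *ᵥ y)
            = t * (z ⬝ᵥ (((2⁻¹ : ℝ) • (R + Rᵀ)) *ᵥ z)) := by
          have e : ∀ (w v : Fin n → ℝ), w ⬝ᵥ (((2⁻¹ : ℝ) • (R + Rᵀ)) *ᵥ v)
              = ∑ i, ∑ j, w i * (((2⁻¹ : ℝ) • (R + Rᵀ)) i j * v j) := by
            intro w v
            simp only [dotProduct, Matrix.mulVec, Finset.mul_sum]
          rw [e, e, Finset.mul_sum]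
          refine Finset.sum_congr rfl fun i _ => ?_
          rw [Finset.mul_sum]
          refine Finset.sum_congr rfl fun j _ => ?_
          rw [hyz i, hyz j]
          linear_combination (z i * (((2⁻¹ : ℝ) • (R + Rᵀ)) i j * z j)) * hts
        have hzmem : z ⬝ᵥ (((2⁻¹ : ℝ) • (R + Rᵀ)) *ᵥ z)
            ≤ lambdaTwo π ((2⁻¹ : ℝ) • (R + Rᵀ)) :=
          le_csSup hbddA ⟨z, hz1, hz2, rfl⟩
        have hzb : z ⬝ᵥ (((2⁻¹ : ℝ) • (R + Rᵀ)) *ᵥ z) ≤ 1 - ξ ^ 2 / 2 := hzmem.trans hlamtwo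
        have h1ξ : (0 : ℝ) ≤ 1 - ξ ^ 2 / 2 := by nlinarith
        have hyMy : y ⬝ᵥ (((2⁻¹ : ℝ) • (R + Rᵀ)) *ᵥ y) ≤ 1 - ξ ^ 2 / 2 := by
          rw [hscale]
          calc t * (z ⬝ᵥ (((2⁻¹ : ℝ) • (R + Rᵀ)) *ᵥ z)) ≤ t * (1 - ξ ^ 2 / 2) :=
                mul_le_mul_of_nonneg_left hzb hpos.le
            _ ≤ 1 * (1 - ξ ^ 2 / 2) := by
                refine mul_le_mul_of_nonneg_right ?_ h1ξ
                rw [htdef]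
                exact hyle
            _ = 1 - ξ ^ 2 / 2 := one_mul _
        exact le_trans (hquad y) hyMy
    have hsum_eq : ∑ i, (((Matrix.of fun i j => R i j - Real.sqrt (π i) * Real.sqrt (π j)) *ᵥ x) i) ^ 2
        = ∑ i, (∑ j, R i j * y j) ^ 2 :=
      Finset.sum_congr rfl fun i _ => by rw [hBx i]
    rw [hsum_eq]
    have hsq2 : (1 : ℝ) - ξ ^ 2 / 2 ≤ (1 - ξ ^ 2 / 4) ^ 2 := by nlinarith
    calc Real.sqrt (∑ i, (∑ j, R i j * y j) ^ 2)
        ≤ Real.sqrt ((1 - ξ ^ 2 / 4) ^ 2) := Real.sqrt_le_sqrt (hT.trans hsq2)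
      _ = 1 - ξ ^ 2 / 4 := Real.sqrt_sq (by nlinarith)
  · nlinarith
end

section
/- Consider the block pairwise comparison matrix $P_\theta \in (0,1)^{n\times n}$ on the complete graph ($n$ even) defined by: $p_{ij} = 1/2$ if $i,j$ are both in $\{1,\dots,n/2\}$ or both in $\{n/2+1,\dots,n\}$; $p_{ij} = 1/2 + \eta (Q_\theta)_{i, j-n/2}$ if $i \le n/2 < j$; and $p_{ij} = 1/2 - \eta (Q_\theta)_{j, i - n/2}$ if $j \le n/2 < i$, where $Q_\theta$ is an $(n/2)\times(n/2)$ permutation matrix and $\eta \in (0, 1/2)$. Then the stationary distribution $\pi$ of the canonical Markov matrix (any $d \ge n$) is given by $\pi_i = \frac{1}{n}(1 - \frac{4\eta}{n})$ for $i \le n/2$ and $\pi_i = \frac{1}{n}(1 + \frac{4\eta}{n})$ for $i > n/2$, independent of the permutation $\theta$. -/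
open Finset

/-- Stationary distribution of the block-perturbed pairwise comparison model used in
the lower bound construction: for the model with `p_{ij} = 1/2` within each half and
`1/2 ± η·(Q_θ)` across halves, the stationary distribution of the canonical Markov
matrix (any `d ≥ n`) is `(1/n)(1 - 4η/n)` on the first half and `(1/n)(1 + 4η/n)` on
the second half, independently of the permutation `θ`. -/
theorem block_perturbed_stationary_distribution (m : ℕ) (hm : 0 < m)
    (σ : Equiv.Perm (Fin m)) (η : ℝ) (hη0 : 0 < η) (hη : η < 1 / 2)
    (d : ℝ) (hd : (2 * m : ℝ) ≤ d)
    (p : (Fin m ⊕ Fin m) → (Fin m ⊕ Fin m) → ℝ)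
    (hpLL : ∀ a b : Fin m, p (Sum.inl a) (Sum.inl b) = 1 / 2)
    (hpRR : ∀ a b : Fin m, p (Sum.inr a) (Sum.inr b) = 1 / 2)
    (hpLR : ∀ a b : Fin m,
      p (Sum.inl a) (Sum.inr b) = 1 / 2 + η * (if σ a = b then 1 else 0))
    (hpRL : ∀ a b : Fin m,
      p (Sum.inr b) (Sum.inl a) = 1 / 2 - η * (if σ a = b then 1 else 0))
    (S : Matrix (Fin m ⊕ Fin m) (Fin m ⊕ Fin m) ℝ)
    (hSoff : ∀ i j, i ≠ j → S i j = p i j / d)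
    (hSdiag : ∀ i, S i i = 1 - (∑ k ∈ Finset.univ \ {i}, p i k) / d)
    (π : (Fin m ⊕ Fin m) → ℝ)
    (hπ : π = Sum.elim
      (fun _ => (1 / (2 * m : ℝ)) * (1 - 4 * η / (2 * m : ℝ)))
      (fun _ => (1 / (2 * m : ℝ)) * (1 + 4 * η / (2 * m : ℝ)))) :
    (∀ j, ∑ i, π i * S i j = π j) ∧ (∑ i, π i = 1) := by
  have hm1 : (1:ℝ) ≤ (m:ℝ) := by exact_mod_cast hm
  have hmne : (m:ℝ) ≠ 0 := by positivity
  have hdpos : (0:ℝ) < d := lt_of_lt_of_le (by positivity) hd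
  have hdne : d ≠ 0 := ne_of_gt hdpos
  have hcard : ((Finset.univ : Finset (Fin m)).card : ℝ) = (m:ℝ) := by simp
  subst hπ
  constructor
  · intro j
    rw [Fintype.sum_sum_type]
    simp only [Sum.elim_inl, Sum.elim_inr]
    cases j with
    | inl b =>
      have hdiag : S (Sum.inl b) (Sum.inl b) = 1 - ((m:ℝ) + η - 1/2)/d := by
        rw [hSdiag]
        have hs : ∑ k ∈ Finset.univ \ {Sum.inl b}, p (Sum.inl b) k
            = (∑ k, p (Sum.inl b) k) - p (Sum.inl b) (Sum.inl b) := by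
          rw [Finset.sum_sdiff_eq_sub (Finset.singleton_subset_iff.mpr (Finset.mem_univ _)),
            Finset.sum_singleton]
        rw [hs, Fintype.sum_sum_type]
        simp only [hpLL, hpLR, Finset.sum_add_distrib, Finset.sum_const, Finset.card_univ,
          Fintype.card_fin, nsmul_eq_mul, ← Finset.mul_sum, Finset.sum_ite_eq,
          Finset.mem_univ, if_true]
        ring_nf
      have hA : ∑ a : Fin m, S (Sum.inl a) (Sum.inl b)
          = ((m:ℝ) - 1) * ((1/2)/d) + (1 - ((m:ℝ) + η - 1/2)/d) := by
        rw [← Finset.sum_erase_add _ _ (Finset.mem_univ b), hdiag]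
        congr 1
        rw [Finset.sum_congr rfl (fun a ha => by
          rw [hSoff _ _ (fun h => (Finset.mem_erase.mp ha).1 (Sum.inl.inj h)), hpLL])]
        rw [Finset.sum_const, Finset.card_erase_of_mem (Finset.mem_univ b), nsmul_eq_mul]
        congr 1
        rw [Finset.card_univ, Fintype.card_fin, Nat.cast_sub hm]
        simp
      have hB : ∑ a : Fin m, S (Sum.inr a) (Sum.inl b) = ((m:ℝ) * (1/2) - η)/d := by
        rw [Finset.sum_congr rfl (fun a _ => by
          rw [hSoff _ _ (by simp), hpRL])]
        rw [← Finset.sum_div]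
        congr 1
        simp only [Finset.sum_sub_distrib, Finset.sum_const, Finset.card_univ,
          Fintype.card_fin, nsmul_eq_mul, ← Finset.mul_sum, Finset.sum_ite_eq,
          Finset.mem_univ, if_true]
        ring
      rw [← Finset.mul_sum, ← Finset.mul_sum, hA, hB, Sum.elim_inl]
      field_simp
      ring
    | inr b =>
      have hq : ∑ a : Fin m, (if σ a = b then (1:ℝ) else 0) = 1 := by
        simp only [Equiv.apply_eq_iff_eq_symm_apply, Finset.sum_ite_eq',
          Finset.mem_univ, if_true]
      have hdiag : S (Sum.inr b) (Sum.inr b) = 1 - ((m:ℝ) - η - 1/2)/d := by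
        rw [hSdiag]
        have hs : ∑ k ∈ Finset.univ \ {Sum.inr b}, p (Sum.inr b) k
            = (∑ k, p (Sum.inr b) k) - p (Sum.inr b) (Sum.inr b) := by
          rw [Finset.sum_sdiff_eq_sub (Finset.singleton_subset_iff.mpr (Finset.mem_univ _)),
            Finset.sum_singleton]
        rw [hs, Fintype.sum_sum_type]
        simp only [hpRR, hpRL, Finset.sum_sub_distrib, Finset.sum_const, Finset.card_univ,
          Fintype.card_fin, nsmul_eq_mul, ← Finset.mul_sum, hq]
        ring_nf
      have hA : ∑ a : Fin m, S (Sum.inl a) (Sum.inr b) = ((m:ℝ) * (1/2) + η)/d := by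
        rw [Finset.sum_congr rfl (fun a _ => by
          rw [hSoff _ _ (by simp), hpLR])]
        rw [← Finset.sum_div]
        congr 1
        simp only [Finset.sum_add_distrib, Finset.sum_const, Finset.card_univ,
          Fintype.card_fin, nsmul_eq_mul, ← Finset.mul_sum, hq]
        ring
      have hB : ∑ a : Fin m, S (Sum.inr a) (Sum.inr b)
          = ((m:ℝ) - 1) * ((1/2)/d) + (1 - ((m:ℝ) - η - 1/2)/d) := by
        rw [← Finset.sum_erase_add _ _ (Finset.mem_univ b), hdiag]
        congr 1
        rw [Finset.sum_congr rfl (fun a ha => by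
          rw [hSoff _ _ (fun h => (Finset.mem_erase.mp ha).1 (Sum.inr.inj h)), hpRR])]
        rw [Finset.sum_const, Finset.card_erase_of_mem (Finset.mem_univ b), nsmul_eq_mul]
        congr 1
        rw [Finset.card_univ, Fintype.card_fin, Nat.cast_sub hm]
        simp
      rw [← Finset.mul_sum, ← Finset.mul_sum, hA, hB, Sum.elim_inr]
      field_simp
      ring
  · rw [Fintype.sum_sum_type]
    simp only [Sum.elim_inl, Sum.elim_inr, Finset.sum_const, Finset.card_univ,
      Fintype.card_fin, nsmul_eq_mul]
    field_simp
    ring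
end
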